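/- arXiv:1402.1288 — 7 statements merged into one kernel-verified Lean document; each statement's English description precedes it below -/
import Mathlib

section
/- Let PMI : [0,∞) → ℝ be monotone and satisfy PMI(V) = PMI(ρV) + PMI((1−ρ)V) for every V ≥ 0 and every ρ ∈ [0,1]. Then PMI(V) = PMI(1)·V for all V ≥ 0; that is, the permanent market impact is linear in the volume. -/
/-!
Splitting the volume `a + b` with `ρ = a / (a + b)` turns the hypothesis into Cauchy's equation
`f (a + b) = f a + f b` on `[0, ∞)`, hence `f (n * x) = n * f x`. Squeezing `n * x` between the
integers `⌊n * x⌋₊` and `⌊n * x⌋₊ + 1` and using monotonicity gives `|n * (f x - f 1 * x)| ≤ f 1`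
for every `n`, which forces `f x = f 1 * x`.
-/

open Set

lemma nonpos_of_forall_natCast_mul_le {K : Type*} [Field K] [LinearOrder K]
    [IsStrictOrderedRing K] [Archimedean K] {a C : K} (h : ∀ n : ℕ, n * a ≤ C) : a ≤ 0 := by
  by_contra! ha
  obtain ⟨n, hn⟩ := exists_nat_gt (C / a)
  have := h n
  rw [div_lt_iff₀ ha] at hn
  linarith

section HalfLine

variable {f : ℝ → ℝ}

lemma map_add_of_splitting
    (hsplit : ∀ V : ℝ, 0 ≤ V → ∀ ρ ∈ Icc (0 : ℝ) 1, f V = f (ρ * V) + f ((1 - ρ) * V))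
    {a b : ℝ} (ha : 0 ≤ a) (hb : 0 ≤ b) : f (a + b) = f a + f b := by
  rcases (add_nonneg ha hb).eq_or_lt with hab | hab
  · obtain ⟨rfl, rfl⟩ : a = 0 ∧ b = 0 := ⟨by linarith, by linarith⟩
    simpa using hsplit 0 le_rfl 0 ⟨le_rfl, zero_le_one⟩
  · have hρ : a / (a + b) ∈ Icc (0 : ℝ) 1 :=
      ⟨by positivity, (div_le_one hab).2 (by linarith)⟩
    have hb' : (1 - a / (a + b)) * (a + b) = b := by
      field_simp
      ring
    simpa [div_mul_cancel₀ a hab.ne', hb'] using hsplit (a + b) hab.le _ hρ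

variable (hadd : ∀ a b : ℝ, 0 ≤ a → 0 ≤ b → f (a + b) = f a + f b)
include hadd

lemma map_zero_of_map_add : f 0 = 0 := by
  simpa using hadd 0 0 le_rfl le_rfl

lemma map_natCast_mul_of_map_add (n : ℕ) {x : ℝ} (hx : 0 ≤ x) : f (n * x) = n * f x := by
  induction n with
  | zero => simp [map_zero_of_map_add hadd]
  | succ n ih =>
    rw [Nat.cast_succ, add_one_mul, hadd _ _ (by positivity) hx, ih, add_one_mul]

variable (hmono : MonotoneOn f (Ici 0))
include hmono

lemma natCast_mul_sub_mul_le_of_monotoneOn (n : ℕ) {x : ℝ} (hx : 0 ≤ x) :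
    n * (f x - f 1 * x) ≤ f 1 ∧ n * (f 1 * x - f x) ≤ f 1 := by
  have hf1 : 0 ≤ f 1 := by
    simpa [map_zero_of_map_add hadd] using hmono (mem_Ici.2 le_rfl) (mem_Ici.2 zero_le_one) zero_le_one
  have hnx : 0 ≤ (n : ℝ) * x := by positivity
  set k := ⌊(n : ℝ) * x⌋₊
  have hk_le : (k : ℝ) ≤ n * x := Nat.floor_le hnx
  have hk_lt : (n : ℝ) * x < k + 1 := Nat.lt_floor_add_one _
  have hf_nat : ∀ m : ℕ, f m = m * f 1 := fun m => by
    simpa using map_natCast_mul_of_map_add hadd m zero_le_one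
  have hlower : f k ≤ n * f x := by
    rw [← map_natCast_mul_of_map_add hadd n hx]
    exact hmono (mem_Ici.2 k.cast_nonneg) hnx hk_le
  have hupper : n * f x ≤ f ↑(k + 1) := by
    rw [← map_natCast_mul_of_map_add hadd n hx]
    exact hmono hnx (mem_Ici.2 (k + 1).cast_nonneg) (by push_cast; exact hk_lt.le)
  rw [hf_nat] at hlower hupper
  push_cast at hupper
  constructor <;> nlinarith

theorem eq_mul_of_monotoneOn_of_map_add {x : ℝ} (hx : 0 ≤ x) : f x = f 1 * x := by
  have hbounds := fun n => natCast_mul_sub_mul_le_of_monotoneOn hadd hmono n hx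
  have h₁ := nonpos_of_forall_natCast_mul_le fun n => (hbounds n).1
  have h₂ := nonpos_of_forall_natCast_mul_le fun n => (hbounds n).2
  linarith

end HalfLine

/-- A monotone permanent-market-impact function satisfying the
splitting identity `PMI(V) = PMI(ρV) + PMI((1−ρ)V)` for all `V ≥ 0` and `ρ ∈ [0,1]`
is linear: `PMI(V) = PMI(1)·V` for all `V ≥ 0`. -/
theorem permanent_impact_linear
    (PMI : ℝ → ℝ)
    (hmono : MonotoneOn PMI (Set.Ici (0:ℝ)))
    (hsplit : ∀ V : ℝ, 0 ≤ V → ∀ ρ ∈ Set.Icc (0:ℝ) 1,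
      PMI V = PMI (ρ * V) + PMI ((1 - ρ) * V)) :
    ∀ V : ℝ, 0 ≤ V → PMI V = PMI 1 * V :=
  fun _ hV => eq_mul_of_monotoneOn_of_map_add
    (fun _ _ ha hb => map_add_of_splitting hsplit ha hb) hmono hV
end

section
/- Let φ : [0,∞) → [0,∞) be integrable with ‖φ‖₁ := ∫₀^∞ φ < 1, let ψ := Σ_{k=1}^∞ φ^{*k}, and let κ, v > 0. Define for t ≥ 0 the propagator kernel ζ(t) := κ v (1 + ∫_t^∞ ψ(u) du − ∫_t^∞ ∫₀^t ψ(u−s) φ(s) ds du). Then ζ(t) = (κ v/(1 − ‖φ‖₁)) · ((1 − ‖φ‖₁) + ∫_t^∞ φ(s) ds) = ζ(0) · (1 − ∫₀^t φ(s) ds) for every t ≥ 0. -/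
open MeasureTheory Filter

/-- Causal convolution of two functions supported on `[0,∞)`:
`(f * g)(t) = ∫₀^t f(t−s) g(s) ds`. -/
noncomputable def causalConv (f g : ℝ → ℝ) : ℝ → ℝ :=
  fun t => ∫ s in (0:ℝ)..t, f (t - s) * g s

/-- `convPow φ k` is the `(k+1)`-st convolution power `φ^{*(k+1)}` of `φ`. -/
noncomputable def convPow (φ : ℝ → ℝ) : ℕ → ℝ → ℝ
  | 0 => φ
  | k + 1 => causalConv φ (convPow φ k)

/-!
The function `ψ = ∑ₖ φ^{*k}` solves the renewal equation `ψ = φ + φ * ψ` and has mass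
`‖ψ‖₁ = ‖φ‖₁ / (1 - ‖φ‖₁)`. Integrate the renewal equation over `[t, ∞)` and split the convolution
`∫ φ(s) ψ(u - s) ds` at `s = t`: the part `s ∈ (0, t]` is the double integral in `ζ`, while for
`s > t` the integral over `u ≥ t` sees all of the support of `ψ(· - s)` and contributes
`‖ψ‖₁ ∫_t^∞ φ`. Hence `∫_t^∞ ψ - ∫_t^∞ ∫_0^t ψ(u - s) φ(s) ds du = (1 + ‖ψ‖₁) ∫_t^∞ φ`, and
`1 + ‖ψ‖₁ = 1 / (1 - ‖φ‖₁)`. The computation is carried out for `ℝ≥0∞`-valued integrals, where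
Tonelli, the geometric series and the renewal equation need no integrability side conditions.
-/

open Set
open scoped ENNReal

section CausalConv

variable {f g : ℝ → ℝ}

lemma causalConv_integrand_eq_zero (hf : ∀ t < 0, f t = 0) (hg : ∀ t < 0, g t = 0) {t s : ℝ}
    (hs : s ∉ Icc 0 t) : f (t - s) * g s = 0 := by
  rcases not_and_or.1 hs with hs | hs
  · rw [hg s (not_le.1 hs), mul_zero]
  · rw [hf (t - s) (by linarith [not_le.1 hs]), zero_mul]

lemma causalConv_eq_integral (hf : ∀ t < 0, f t = 0) (hg : ∀ t < 0, g t = 0) (t : ℝ) :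
    causalConv f g t = ∫ s, f (t - s) * g s := by
  rcases lt_or_ge t 0 with ht | ht
  · have hzero (s : ℝ) : f (t - s) * g s = 0 :=
      causalConv_integrand_eq_zero hf hg (by simp [Icc_eq_empty_of_lt ht])
    simp [causalConv, hzero]
  · rw [causalConv, intervalIntegral.integral_of_le ht, ← integral_Icc_eq_integral_Ioc]
    exact setIntegral_eq_integral_of_forall_compl_eq_zero fun s hs =>
      causalConv_integrand_eq_zero hf hg hs

lemma causalConv_eq_zero_of_neg (hf : ∀ t < 0, f t = 0) (hg : ∀ t < 0, g t = 0) {t : ℝ}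
    (ht : t < 0) : causalConv f g t = 0 := by
  rw [causalConv_eq_integral hf hg]
  exact integral_eq_zero_of_ae (Eventually.of_forall fun s =>
    causalConv_integrand_eq_zero hf hg (by simp [Icc_eq_empty_of_lt ht]))

lemma causalConv_nonneg (hf : ∀ t < 0, f t = 0) (hg : ∀ t < 0, g t = 0) (hf' : ∀ t, 0 ≤ f t)
    (hg' : ∀ t, 0 ≤ g t) (t : ℝ) : 0 ≤ causalConv f g t := by
  rw [causalConv_eq_integral hf hg]
  exact integral_nonneg fun s => mul_nonneg (hf' _) (hg' _)

lemma measurable_causalConv (hf : ∀ t < 0, f t = 0) (hg : ∀ t < 0, g t = 0)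
    (hfm : Measurable f) (hgm : Measurable g) : Measurable (causalConv f g) := by
  rw [funext (causalConv_eq_integral hf hg)]
  exact (((hfm.comp (measurable_fst.sub measurable_snd)).mul
    (hgm.comp measurable_snd)).stronglyMeasurable.integral_prod_right').measurable

end CausalConv

section ConvPow

variable {φ : ℝ → ℝ}

lemma convPow_eq_zero_of_neg (hφ : ∀ t < 0, φ t = 0) (k : ℕ) {t : ℝ} (ht : t < 0) :
    convPow φ k t = 0 := by
  induction k generalizing t with
  | zero => exact hφ t ht
  | succ k ih => exact causalConv_eq_zero_of_neg hφ (fun _ => ih) ht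

lemma convPow_nonneg (hφ : ∀ t < 0, φ t = 0) (hφ' : ∀ t, 0 ≤ φ t) (k : ℕ) (t : ℝ) :
    0 ≤ convPow φ k t := by
  induction k generalizing t with
  | zero => exact hφ' t
  | succ k ih =>
    exact causalConv_nonneg hφ (fun _ => convPow_eq_zero_of_neg hφ k) hφ' ih t

lemma measurable_convPow (hφ : ∀ t < 0, φ t = 0) (hφm : Measurable φ) (k : ℕ) :
    Measurable (convPow φ k) := by
  induction k with
  | zero => exact hφm
  | succ k ih => exact measurable_causalConv hφ (fun _ => convPow_eq_zero_of_neg hφ k) hφm ih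

lemma convPow_succ_eq_integral (hφ : ∀ t < 0, φ t = 0) (k : ℕ) (t : ℝ) :
    convPow φ (k + 1) t = ∫ s, φ (t - s) * convPow φ k s :=
  causalConv_eq_integral hφ (fun _ => convPow_eq_zero_of_neg hφ k) t

end ConvPow

section LConvolution

variable {G : Type*} [MeasurableSpace G] [AddGroup G] [MeasurableAdd₂ G] [MeasurableNeg G]
  {μ : Measure G} [μ.IsAddLeftInvariant] [SFinite μ]

theorem lintegral_lconvolution {f g : G → ℝ≥0∞} (hf : Measurable f) (hg : Measurable g) :
    ∫⁻ x, (f ⋆ₗ[μ] g) x ∂μ = (∫⁻ x, f x ∂μ) * ∫⁻ x, g x ∂μ := by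
  simp only [lconvolution_def]
  rw [lintegral_lintegral_swap (by fun_prop)]
  have hinner (y : G) : ∫⁻ x, f y * g (-y + x) ∂μ = f y * ∫⁻ x, g x ∂μ := by
    rw [lintegral_const_mul _ (by fun_prop), lintegral_add_left_eq_self g]
  simp_rw [hinner, lintegral_mul_const _ hf]

end LConvolution

lemma ofReal_integral_mul_sub_eq_lconvolution {f c : ℝ → ℝ} (hf : ∀ s, 0 ≤ f s)
    (hc : ∀ s, 0 ≤ c s) (hfm : Measurable f) (hcm : Measurable c) {t : ℝ}
    (ht : ((ENNReal.ofReal ∘ c) ⋆ₗ (ENNReal.ofReal ∘ f)) t ≠ ∞) :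
    ENNReal.ofReal (∫ s, f (t - s) * c s) = ((ENNReal.ofReal ∘ c) ⋆ₗ (ENNReal.ofReal ∘ f)) t := by
  have hlint : ∫⁻ s, ENNReal.ofReal (f (t - s) * c s)
      = ((ENNReal.ofReal ∘ c) ⋆ₗ (ENNReal.ofReal ∘ f)) t := by
    simp only [lconvolution_def, Function.comp_apply, neg_add_eq_sub]
    refine lintegral_congr fun s => ?_
    rw [mul_comm, ENNReal.ofReal_mul (hc s)]
  rw [integral_eq_lintegral_of_nonneg_ae (Eventually.of_forall fun s =>
      mul_nonneg (hf _) (hc _)) (by fun_prop), hlint, ENNReal.ofReal_toReal ht]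

section ConvPowSum

variable {φ : ℝ → ℝ}

noncomputable def convPowSum (φ : ℝ → ℝ) (t : ℝ) : ℝ := ∑' k, convPow φ k t

noncomputable def lconvPowSum (φ : ℝ → ℝ) (t : ℝ) : ℝ≥0∞ := ∑' k, ENNReal.ofReal (convPow φ k t)

lemma convPowSum_eq_toReal_lconvPowSum (hφ : ∀ t < 0, φ t = 0) (hφ' : ∀ t, 0 ≤ φ t) (t : ℝ) :
    convPowSum φ t = (lconvPowSum φ t).toReal := by
  rw [lconvPowSum, ENNReal.tsum_toReal_eq fun _ => ENNReal.ofReal_ne_top]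
  exact tsum_congr fun k => (ENNReal.toReal_ofReal (convPow_nonneg hφ hφ' k t)).symm

lemma measurable_lconvPowSum (hφ : ∀ t < 0, φ t = 0) (hφm : Measurable φ) :
    Measurable (lconvPowSum φ) :=
  Measurable.tsum fun k => (measurable_convPow hφ hφm k).ennreal_ofReal

lemma measurable_convPowSum (hφ : ∀ t < 0, φ t = 0) (hφ' : ∀ t, 0 ≤ φ t) (hφm : Measurable φ) :
    Measurable (convPowSum φ) := by
  rw [funext (convPowSum_eq_toReal_lconvPowSum hφ hφ')]
  exact (measurable_lconvPowSum hφ hφm).ennreal_toReal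

variable (hφ : ∀ t < 0, φ t = 0) (hφ' : ∀ t, 0 ≤ φ t) (hφm : Measurable φ) (hφi : Integrable φ)
include hφ hφ' hφm hφi

lemma ofReal_convPow_succ_ae_eq {k : ℕ} (hk : ∫⁻ t, ENNReal.ofReal (convPow φ k t) ≠ ∞) :
    ENNReal.ofReal ∘ convPow φ (k + 1)
      =ᵐ[volume] (ENNReal.ofReal ∘ convPow φ k) ⋆ₗ (ENNReal.ofReal ∘ φ) := by
  have hCm := measurable_convPow hφ hφm k
  have hfin : ∫⁻ t, ((ENNReal.ofReal ∘ convPow φ k) ⋆ₗ (ENNReal.ofReal ∘ φ)) t ≠ ∞ := by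
    rw [lintegral_lconvolution (by fun_prop) (by fun_prop)]
    exact ENNReal.mul_ne_top hk hφi.lintegral_lt_top.ne
  filter_upwards [ae_lt_top (measurable_lconvolution _ (by fun_prop) (by fun_prop)) hfin]
    with t ht
  rw [Function.comp_apply, convPow_succ_eq_integral hφ]
  exact ofReal_integral_mul_sub_eq_lconvolution hφ' (convPow_nonneg hφ hφ' k) hφm hCm ht.ne

lemma lintegral_ofReal_convPow (k : ℕ) :
    ∫⁻ t, ENNReal.ofReal (convPow φ k t) = (∫⁻ t, ENNReal.ofReal (φ t)) ^ (k + 1) := by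
  induction k with
  | zero => simp [convPow]
  | succ k ih =>
    have hk : ∫⁻ t, ENNReal.ofReal (convPow φ k t) ≠ ∞ :=
      ih ▸ ENNReal.pow_ne_top hφi.lintegral_lt_top.ne
    have hCm := measurable_convPow hφ hφm k
    have hC := lintegral_congr_ae (ofReal_convPow_succ_ae_eq hφ hφ' hφm hφi hk)
    rw [lintegral_lconvolution (by fun_prop) (by fun_prop)] at hC
    simp only [Function.comp_apply, ih] at hC
    rw [hC, ← pow_succ]

lemma one_add_lintegral_lconvPowSum :
    1 + ∫⁻ t, lconvPowSum φ t = (1 - ∫⁻ t, ENNReal.ofReal (φ t))⁻¹ := by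
  have hsum : ∫⁻ t, lconvPowSum φ t = ∑' k, (∫⁻ t, ENNReal.ofReal (φ t)) ^ (k + 1) := by
    simp only [lconvPowSum, ← lintegral_ofReal_convPow hφ hφ' hφm hφi]
    exact lintegral_tsum fun k => (measurable_convPow hφ hφm k).ennreal_ofReal.aemeasurable
  rw [hsum, ← ENNReal.tsum_geometric, tsum_eq_zero_add' ENNReal.summable (f := fun k => _ ^ k),
    pow_zero]

lemma lconvPowSum_ae_eq :
    lconvPowSum φ =ᵐ[volume] ENNReal.ofReal ∘ φ + lconvPowSum φ ⋆ₗ (ENNReal.ofReal ∘ φ) := by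
  have hfin (k : ℕ) : ∫⁻ t, ENNReal.ofReal (convPow φ k t) ≠ ∞ := by
    rw [lintegral_ofReal_convPow hφ hφ' hφm hφi]
    exact ENNReal.pow_ne_top hφi.lintegral_lt_top.ne
  filter_upwards [ae_all_iff.2 fun k => ofReal_convPow_succ_ae_eq hφ hφ' hφm hφi (hfin k)]
    with t ht
  have hconv : (lconvPowSum φ ⋆ₗ (ENNReal.ofReal ∘ φ)) t
      = ∑' k, ((ENNReal.ofReal ∘ convPow φ k) ⋆ₗ (ENNReal.ofReal ∘ φ)) t := by
    simp only [lconvolution_def, lconvPowSum, ← ENNReal.tsum_mul_right]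
    exact lintegral_tsum fun k => by
      have := measurable_convPow hφ hφm k
      fun_prop
  rw [Pi.add_apply, hconv, lconvPowSum, tsum_eq_zero_add' ENNReal.summable]
  simp only [← ht, Function.comp_apply, convPow]

end ConvPowSum

section RenewalEquation

variable {Φ F : ℝ → ℝ≥0∞}

lemma lconvolution_eq_setLIntegral_Ioc_add_setLIntegral_Ioi (hΦ : ∀ s < 0, Φ s = 0) {t : ℝ}
    (ht : 0 ≤ t) (u : ℝ) :
    (Φ ⋆ₗ F) u = (∫⁻ s in Ioc 0 t, Φ s * F (-s + u)) + ∫⁻ s in Ioi t, Φ s * F (-s + u) := by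
  have hsupp : Function.support (fun s => Φ s * F (-s + u)) ⊆ Ici 0 := fun s hs =>
    mem_Ici.2 <| not_lt.1 fun hneg => hs (by simp [hΦ s hneg])
  rw [← lintegral_union measurableSet_Ioi Ioc_disjoint_Ioi_same, Ioc_union_Ioi_eq_Ioi ht,
    setLIntegral_congr Ioi_ae_eq_Ici, setLIntegral_eq_of_support_subset hsupp, lconvolution_def]

lemma setLIntegral_Ici_setLIntegral_Ioi_mul_neg_add (hF : ∀ s < 0, F s = 0)
    (hΦm : Measurable Φ) (hFm : Measurable F) (t : ℝ) :
    ∫⁻ u in Ici t, ∫⁻ s in Ioi t, Φ s * F (-s + u) = (∫⁻ s in Ici t, Φ s) * ∫⁻ u, F u := by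
  have hinner : ∀ s ∈ Ioi t, ∫⁻ u in Ici t, Φ s * F (-s + u) = Φ s * ∫⁻ u, F u := by
    intro s hs
    have hsupp : Function.support (fun u => F (-s + u)) ⊆ Ici t := fun u hu =>
      mem_Ici.2 <| not_lt.1 fun hlt => hu (hF _ (by linarith [mem_Ioi.1 hs]))
    rw [lintegral_const_mul _ (by fun_prop), setLIntegral_eq_of_support_subset hsupp,
      lintegral_add_left_eq_self F]
  rw [lintegral_lintegral_swap (by fun_prop), setLIntegral_congr_fun measurableSet_Ioi hinner,
    lintegral_mul_const _ hΦm, setLIntegral_congr Ioi_ae_eq_Ici]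

lemma setLIntegral_Ici_eq_of_ae_eq_add_lconvolution (hΦ : ∀ s < 0, Φ s = 0)
    (hF : ∀ s < 0, F s = 0) (hΦm : Measurable Φ) (hFm : Measurable F)
    (hren : F =ᵐ[volume] Φ + Φ ⋆ₗ F) {t : ℝ} (ht : 0 ≤ t) :
    ∫⁻ u in Ici t, F u = (∫⁻ u in Ici t, ∫⁻ s in Ioc 0 t, Φ s * F (-s + u))
      + (∫⁻ s in Ici t, Φ s) * (1 + ∫⁻ u, F u) := by
  have hsplit : ∀ᵐ u ∂volume.restrict (Ici t), F u = Φ u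
      + ((∫⁻ s in Ioc 0 t, Φ s * F (-s + u)) + ∫⁻ s in Ioi t, Φ s * F (-s + u)) :=
    ae_restrict_of_ae <| hren.mono fun u hu => by
      rw [hu, Pi.add_apply, lconvolution_eq_setLIntegral_Ioc_add_setLIntegral_Ioi hΦ ht]
  rw [lintegral_congr_ae hsplit, lintegral_add_left hΦm, lintegral_add_left (by fun_prop),
    setLIntegral_Ici_setLIntegral_Ioi_mul_neg_add hF hΦm hFm]
  ring

end RenewalEquation

section Subcritical

variable {φ : ℝ → ℝ} (hφ : ∀ t < 0, φ t = 0) (hφ' : ∀ t, 0 ≤ φ t) (hφm : Measurable φ)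
  (hφi : Integrable φ) (hφ1 : ∫ t, φ t < 1)
include hφ hφ' hφm hφi hφ1

omit hφ hφm in
lemma lintegral_ofReal_lt_one : ∫⁻ t, ENNReal.ofReal (φ t) < 1 := by
  rw [← ofReal_integral_eq_lintegral_ofReal hφi (Eventually.of_forall hφ')]
  exact ENNReal.ofReal_lt_one.2 hφ1

omit hφ hφm in
lemma inv_one_sub_lintegral_ofReal_ne_top : (1 - ∫⁻ t, ENNReal.ofReal (φ t))⁻¹ ≠ ∞ :=
  ENNReal.inv_ne_top.2 (tsub_pos_iff_lt.2 (lintegral_ofReal_lt_one hφ' hφi hφ1)).ne'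

lemma ofReal_convPowSum_ae_eq_lconvPowSum :
    ENNReal.ofReal ∘ convPowSum φ =ᵐ[volume] lconvPowSum φ := by
  have hfin : ∫⁻ t, lconvPowSum φ t ≠ ∞ := by
    refine ne_top_of_le_ne_top ?_ (le_add_self (b := 1))
    rw [one_add_lintegral_lconvPowSum hφ hφ' hφm hφi]
    exact inv_one_sub_lintegral_ofReal_ne_top hφ' hφi hφ1
  filter_upwards [ae_lt_top (measurable_lconvPowSum hφ hφm) hfin] with t ht
  rw [Function.comp_apply, convPowSum_eq_toReal_lconvPowSum hφ hφ', ENNReal.ofReal_toReal ht.ne]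

lemma one_add_lintegral_ofReal_convPowSum :
    1 + ∫⁻ t, ENNReal.ofReal (convPowSum φ t) = (1 - ∫⁻ t, ENNReal.ofReal (φ t))⁻¹ := by
  rw [← one_add_lintegral_lconvPowSum hφ hφ' hφm hφi,
    ← lintegral_congr_ae (ofReal_convPowSum_ae_eq_lconvPowSum hφ hφ' hφm hφi hφ1)]
  rfl

lemma ofReal_convPowSum_ae_eq_add_lconvolution :
    ENNReal.ofReal ∘ convPowSum φ
      =ᵐ[volume] ENNReal.ofReal ∘ φ + (ENNReal.ofReal ∘ φ) ⋆ₗ (ENNReal.ofReal ∘ convPowSum φ) := by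
  have hψ := ofReal_convPowSum_ae_eq_lconvPowSum hφ hφ' hφm hφi hφ1
  have hconv : lconvPowSum φ ⋆ₗ (ENNReal.ofReal ∘ φ)
      = (ENNReal.ofReal ∘ convPowSum φ) ⋆ₗ (ENNReal.ofReal ∘ φ) := funext fun t =>
    lintegral_congr_ae <| hψ.mono fun s hs => by simp only [hs]
  refine hψ.trans ((lconvPowSum_ae_eq hφ hφ' hφm hφi).trans (EventuallyEq.of_eq ?_))
  rw [hconv, lconvolution_comm]

lemma setLIntegral_Ici_ofReal_convPowSum {t : ℝ} (ht : 0 ≤ t) :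
    ∫⁻ u in Ici t, ENNReal.ofReal (convPowSum φ u)
      = (∫⁻ u in Ici t, ∫⁻ s in Ioc 0 t,
            ENNReal.ofReal (φ s) * ENNReal.ofReal (convPowSum φ (u - s)))
        + (∫⁻ s in Ici t, ENNReal.ofReal (φ s)) * (1 - ∫⁻ s, ENNReal.ofReal (φ s))⁻¹ := by
  have hm := measurable_convPowSum hφ hφ' hφm
  have h := setLIntegral_Ici_eq_of_ae_eq_add_lconvolution (Φ := ENNReal.ofReal ∘ φ)
    (F := ENNReal.ofReal ∘ convPowSum φ) (fun s hs => by simp [hφ s hs])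
    (fun s hs => by simp [convPowSum, convPow_eq_zero_of_neg hφ _ hs]) (by fun_prop) (by fun_prop)
    (ofReal_convPowSum_ae_eq_add_lconvolution hφ hφ' hφm hφi hφ1) ht
  simp only [Function.comp_apply, neg_add_eq_sub] at h
  rwa [one_add_lintegral_ofReal_convPowSum hφ hφ' hφm hφi hφ1] at h

theorem integral_Ici_convPowSum_sub_integral_Ici_intervalIntegral {t : ℝ} (ht : 0 ≤ t) :
    (∫ u in Ici t, convPowSum φ u) - ∫ u in Ici t, ∫ s in (0 : ℝ)..t, convPowSum φ (u - s) * φ s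
      = (∫ s in Ici t, φ s) / (1 - ∫ s, φ s) := by
  have hm := measurable_convPowSum hφ hφ' hφm
  have hψ' (u : ℝ) : 0 ≤ convPowSum φ u := by
    rw [convPowSum_eq_toReal_lconvPowSum hφ hφ']
    exact ENNReal.toReal_nonneg
  have htoReal (μ : Measure ℝ) {f : ℝ → ℝ} (hf : ∀ u, 0 ≤ f u) (hfm : Measurable f) :
      ∫ u, f u ∂μ = (∫⁻ u, ENNReal.ofReal (f u) ∂μ).toReal :=
    integral_eq_lintegral_of_nonneg_ae (Eventually.of_forall hf) hfm.aestronglyMeasurable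
  set H : ℝ → ℝ≥0∞ := fun u =>
    ∫⁻ s in Ioc 0 t, ENNReal.ofReal (φ s) * ENNReal.ofReal (convPowSum φ (u - s))
  have hinner (u : ℝ) : ∫ s in (0 : ℝ)..t, convPowSum φ (u - s) * φ s = (H u).toReal := by
    rw [intervalIntegral.integral_of_le ht,
      htoReal _ (fun s => mul_nonneg (hψ' _) (hφ' s)) (by fun_prop)]
    exact congrArg ENNReal.toReal <| lintegral_congr fun s => by
      rw [mul_comm, ENNReal.ofReal_mul (hφ' s)]
  have hkey := setLIntegral_Ici_ofReal_convPowSum hφ hφ' hφm hφi hφ1 ht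
  have hφfin : ∫⁻ s in Ici t, ENNReal.ofReal (φ s) ≠ ∞ :=
    ne_top_of_le_ne_top hφi.lintegral_lt_top.ne (setLIntegral_le_lintegral _ _)
  have hc := inv_one_sub_lintegral_ofReal_ne_top hφ' hφi hφ1
  have hψfin : ∫⁻ u in Ici t, ENNReal.ofReal (convPowSum φ u) ≠ ∞ :=
    ne_top_of_le_ne_top hc <| (setLIntegral_le_lintegral _ _).trans <|
      le_add_self.trans_eq (one_add_lintegral_ofReal_convPowSum hφ hφ' hφm hφi hφ1)
  have hHfin : ∫⁻ u in Ici t, H u ≠ ∞ :=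
    ne_top_of_le_ne_top hψfin (le_self_add.trans_eq hkey.symm)
  rw [integral_congr_ae (Eventually.of_forall hinner),
    integral_toReal (by fun_prop) (ae_lt_top (by fun_prop) hHfin), htoReal _ hψ' hm, hkey,
    ENNReal.toReal_add hHfin (ENNReal.mul_ne_top hφfin hc), add_sub_cancel_left, ENNReal.toReal_mul,
    htoReal _ hφ' hφm, htoReal _ hφ' hφm, ENNReal.toReal_inv,
    ENNReal.toReal_sub_of_le (lintegral_ofReal_lt_one hφ' hφi hφ1).le ENNReal.one_ne_top,
    ENNReal.toReal_one, div_eq_mul_inv]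

end Subcritical

theorem propagator_kernel_closed_form_general
    (φ : ℝ → ℝ) (κ v : ℝ)
    (hφpos : ∀ t : ℝ, 0 ≤ φ t)
    (hφsupp : ∀ t : ℝ, t < 0 → φ t = 0)
    (hφmeas : Measurable φ)
    (hφint : IntegrableOn φ (Set.Ici (0:ℝ)))
    (hφnorm : ∫ t in Set.Ici (0:ℝ), φ t < 1)
    (ψ : ℝ → ℝ)
    (hψ : ∀ t : ℝ, ψ t = ∑' k : ℕ, convPow φ k t)
    (ζ : ℝ → ℝ)
    (hζ : ∀ t : ℝ, ζ t = κ * v *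
      (1 + (∫ u in Set.Ici t, ψ u)
        - ∫ u in Set.Ici t, ∫ s in (0:ℝ)..t, ψ (u - s) * φ s)) :
    ∀ t : ℝ, 0 ≤ t →
      ζ t = κ * v / (1 - ∫ s in Set.Ici (0:ℝ), φ s) *
              ((1 - ∫ s in Set.Ici (0:ℝ), φ s) + ∫ s in Set.Ici t, φ s) ∧
      ζ t = ζ 0 * (1 - ∫ s in (0:ℝ)..t, φ s) := by
  have hφi : Integrable φ := (integrableOn_iff_integrable_of_support_subset
    fun t ht => mem_Ici.2 <| not_lt.1 fun hneg => ht (hφsupp t hneg)).1 hφint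
  have htot : ∫ s in Ici 0, φ s = ∫ s, φ s :=
    setIntegral_eq_integral_of_forall_compl_eq_zero fun t ht => hφsupp t (not_le.1 ht)
  rw [htot] at hφnorm ⊢
  have hφnorm' : 1 - ∫ s, φ s ≠ 0 := (sub_pos.2 hφnorm).ne'
  obtain rfl : ψ = convPowSum φ := funext hψ
  have hζ' (t : ℝ) (ht : 0 ≤ t) :
      ζ t = κ * v / (1 - ∫ s, φ s) * ((1 - ∫ s, φ s) + ∫ s in Ici t, φ s) := by
    rw [hζ, add_sub_assoc, integral_Ici_convPowSum_sub_integral_Ici_intervalIntegral hφsupp hφpos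
      hφmeas hφi hφnorm ht]
    field_simp [hφnorm']
  intro t ht
  refine ⟨hζ' t ht, ?_⟩
  have hsplit : (∫ s in (0 : ℝ)..t, φ s) + ∫ s in Ici t, φ s = ∫ s, φ s := by
    rw [integral_Ici_eq_integral_Ioi, intervalIntegral.integral_interval_add_Ioi hφi.integrableOn
      hφi.integrableOn, ← integral_Ici_eq_integral_Ioi, htot]
  rw [hζ' t ht, hζ' 0 le_rfl, htot, ← hsplit]
  field_simp [hφnorm']
  ring

/-- closed form for the propagator kernel
`ζ(t) = κv(1 + ∫_t^∞ ψ − ∫_t^∞ ∫₀^t ψ(u−s)φ(s) ds du)` implied by a Hawkes order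
flow with kernel `φ`, `‖φ‖₁ < 1`:
`ζ(t) = (κv/(1−‖φ‖₁))((1−‖φ‖₁) + ∫_t^∞ φ) = ζ(0)(1 − ∫₀^t φ)`. -/
theorem propagator_kernel_closed_form
    (φ : ℝ → ℝ) (κ v : ℝ) (hκ : 0 < κ) (hv : 0 < v)
    (hφpos : ∀ t : ℝ, 0 ≤ φ t)
    (hφsupp : ∀ t : ℝ, t < 0 → φ t = 0)
    (hφmeas : Measurable φ)
    (hφint : IntegrableOn φ (Set.Ici (0:ℝ)))
    (hφnorm : ∫ t in Set.Ici (0:ℝ), φ t < 1)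
    (ψ : ℝ → ℝ)
    (hψ : ∀ t : ℝ, ψ t = ∑' k : ℕ, convPow φ k t)
    (ζ : ℝ → ℝ)
    (hζ : ∀ t : ℝ, ζ t = κ * v *
      (1 + (∫ u in Set.Ici t, ψ u)
        - ∫ u in Set.Ici t, ∫ s in (0:ℝ)..t, ψ (u - s) * φ s)) :
    ∀ t : ℝ, 0 ≤ t →
      ζ t = κ * v / (1 - ∫ s in Set.Ici (0:ℝ), φ s) *
              ((1 - ∫ s in Set.Ici (0:ℝ), φ s) + ∫ s in Set.Ici t, φ s) ∧
      ζ t = ζ 0 * (1 - ∫ s in (0:ℝ)..t, φ s) :=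
  propagator_kernel_closed_form_general φ κ v hφpos hφsupp hφmeas hφint hφnorm ψ hψ ζ hζ
end

section
/- Let α ∈ (0,1), c > 0, and let Φ : [0,∞) → [0,∞) be bounded, measurable and integrable with x^{1+α} Φ(x) → α c^α as x → ∞. Then for every fixed z > 0, lim_{T→∞} T^α ∫₀^∞ Φ(t)(e^{i t z/T} − 1) dt = θ(1+α) · α · (cz)^α, where θ(1+α) = ∫₀^∞ (e^{iu} − 1) u^{−(1+α)} du. Consequently, writing Φ̂(ξ) = ∫₀^∞ Φ(t) e^{iξt} dt and assuming ∫₀^∞ Φ = 1, one has Φ̂(z/T) = 1 + θ(1+α) α (cz/T)^α + o(T^{−α}) as T → ∞. -/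
/-!
Substituting `t = (T/z) s` turns `T^α ∫₀^∞ Φ(t) (e^{itz/T} - 1) dt` into
`z^α ∫₀^∞ g(Ts/z) s^{-(1+α)} (e^{is} - 1) ds` with `g(x) = x^{1+α} Φ(x)`. The function `g` is
bounded on `(0, ∞)` and tends to `α c^α`, and `s^{-(1+α)} |e^{is} - 1| ≤ min (s^{-α}, 2 s^{-(1+α)})`
is integrable because `0 < α < 1`, so dominated convergence gives the limit `θ α c^α z^α`.
When `∫ Φ = 1`, `Φ̂(ξ) - 1 = ∫₀^∞ Φ(t) (e^{iξt} - 1) dt`, so the expansion of `Φ̂(z/T)` is the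
first limit rescaled by `T^{-α}`.
-/

open MeasureTheory Filter Complex Set Topology

theorem integrableOn_Ioi_exp_I_mul_sub_one_div_rpow {α : ℝ} (hα0 : 0 < α) (hα1 : α < 1) :
    IntegrableOn (fun u : ℝ => (exp (I * u) - 1) / ((u ^ (1 + α) : ℝ) : ℂ)) (Ioi 0) := by
  have hmeas : AEStronglyMeasurable (fun u : ℝ => (exp (I * u) - 1) / ((u ^ (1 + α) : ℝ) : ℂ)) :=
    (by fun_prop : Measurable _).aestronglyMeasurable
  rw [← Ioc_union_Ioi_eq_Ioi zero_le_one]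
  refine IntegrableOn.union ?_ ?_
  · have hdom : IntegrableOn (fun u : ℝ => u ^ (-α)) (Ioc 0 1) := by
      rw [integrableOn_Ioc_iff_integrableOn_Ioo]
      exact (intervalIntegral.integrableOn_Ioo_rpow_iff zero_lt_one).2 (by linarith)
    refine hdom.mono' hmeas.restrict ((ae_restrict_iff' measurableSet_Ioc).2 (.of_forall ?_))
    intro u ⟨hu, _⟩
    rw [norm_div, norm_real, Real.norm_of_nonneg (Real.rpow_nonneg hu.le _),
      div_le_iff₀ (Real.rpow_pos_of_pos hu _), ← Real.rpow_add hu, show -α + (1 + α) = 1 by ring,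
      Real.rpow_one]
    exact Real.norm_exp_I_mul_ofReal_sub_one_le.trans (Real.norm_of_nonneg hu.le).le
  · have hdom : IntegrableOn (fun u : ℝ => 2 * u ^ (-(1 + α))) (Ioi 1) :=
      (integrableOn_Ioi_rpow_of_lt (by linarith) zero_lt_one).const_mul 2
    refine hdom.mono' hmeas.restrict ((ae_restrict_iff' measurableSet_Ioi).2 (.of_forall ?_))
    intro u hu
    have hu0 : (0 : ℝ) < u := zero_lt_one.trans hu
    rw [norm_div, norm_real, Real.norm_of_nonneg (Real.rpow_nonneg hu0.le _),
      Real.rpow_neg hu0.le, ← div_eq_mul_inv]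
    gcongr
    calc ‖exp (I * u) - 1‖ ≤ ‖exp (I * u)‖ + ‖(1 : ℂ)‖ := norm_sub_le _ _
      _ = 2 := by rw [norm_exp_I_mul_ofReal, norm_one]; norm_num

theorem exists_abs_rpow_mul_le_of_tendsto {Φ : ℝ → ℝ} {β L M : ℝ} (hβ : 0 ≤ β)
    (hΦ : ∀ x, |Φ x| ≤ M) (hL : Tendsto (fun x => x ^ β * Φ x) atTop (𝓝 L)) :
    ∃ C, ∀ x ∈ Ioi (0 : ℝ), |x ^ β * Φ x| ≤ C := by
  obtain ⟨x₀, hx₀⟩ := eventually_atTop.1 (hL.abs.eventually_le_const (lt_add_one |L|))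
  refine ⟨max (|L| + 1) (max x₀ 0 ^ β * M), fun x hx => ?_⟩
  rcases le_total x₀ x with h | h
  · exact le_max_of_le_left (hx₀ x h)
  · refine le_max_of_le_right ?_
    rw [abs_mul, abs_of_nonneg (Real.rpow_nonneg (le_of_lt hx) _)]
    exact mul_le_mul (Real.rpow_le_rpow (le_of_lt hx) (le_max_of_le_left h) hβ) (hΦ x)
      (abs_nonneg _) (Real.rpow_nonneg (le_max_right _ _) _)

theorem tendsto_setIntegral_Ioi_comp_mul_smul {E : Type*} [NormedAddCommGroup E]
    [NormedSpace ℝ E] {g : ℝ → ℝ} {k : ℝ → E} {L M : ℝ} (hg : Measurable g)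
    (hgM : ∀ x ∈ Ioi (0 : ℝ), |g x| ≤ M) (hgL : Tendsto g atTop (𝓝 L))
    (hk : IntegrableOn k (Ioi 0)) :
    Tendsto (fun r => ∫ s in Ioi 0, g (r * s) • k s) atTop (𝓝 (L • ∫ s in Ioi 0, k s)) := by
  rw [← integral_smul]
  refine tendsto_integral_filter_of_dominated_convergence (fun s => M * ‖k s‖)
    (.of_forall fun r => (hg.comp (measurable_const_mul r)).aestronglyMeasurable.smul
      hk.aestronglyMeasurable) ?_ (hk.norm.const_mul M) ?_
  · filter_upwards [eventually_gt_atTop 0] with r hr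
    refine (ae_restrict_iff' measurableSet_Ioi).2 (.of_forall fun s hs => ?_)
    rw [norm_smul, Real.norm_eq_abs]
    exact mul_le_mul_of_nonneg_right (hgM _ (mul_pos hr hs)) (norm_nonneg _)
  · refine (ae_restrict_iff' measurableSet_Ioi).2 (.of_forall fun s hs => ?_)
    exact (hgL.comp (tendsto_id.atTop_mul_const hs)).smul_const (k s)

theorem tendsto_rpow_smul_integral_mul_comp_div {Φ : ℝ → ℝ} {ψ : ℝ → ℂ} {α L M : ℝ}
    (hα : 0 ≤ 1 + α) (hΦmeas : Measurable Φ) (hΦ : ∀ x, |Φ x| ≤ M)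
    (hL : Tendsto (fun x => x ^ (1 + α) * Φ x) atTop (𝓝 L))
    (hψ : IntegrableOn (fun s => ψ s / ((s ^ (1 + α) : ℝ) : ℂ)) (Ioi 0)) :
    Tendsto (fun r => (r ^ α : ℝ) • ∫ t in Ioi 0, (Φ t : ℂ) * ψ (t / r)) atTop
      (𝓝 (L • ∫ s in Ioi 0, ψ s / ((s ^ (1 + α) : ℝ) : ℂ))) := by
  obtain ⟨C, hC⟩ := exists_abs_rpow_mul_le_of_tendsto hα hΦ hL
  refine (tendsto_setIntegral_Ioi_comp_mul_smul (by fun_prop) hC hL hψ).congr' ?_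
  filter_upwards [eventually_gt_atTop 0] with r hr
  have hsubst := integral_comp_mul_left_Ioi' (fun t => (Φ t : ℂ) * ψ (t / r)) 0 hr
  rw [mul_zero] at hsubst
  rw [← hsubst, smul_smul, ← integral_smul]
  refine setIntegral_congr_fun measurableSet_Ioi fun s (hs : 0 < s) => ?_
  have hrs : (r * s) ^ (1 + α) = r ^ α * r * s ^ (1 + α) := by
    rw [Real.mul_rpow hr.le hs.le, Real.rpow_add hr, Real.rpow_one, mul_comm r]
  have hsα : ((s ^ (1 + α) : ℝ) : ℂ) ≠ 0 := ofReal_ne_zero.2 (Real.rpow_pos_of_pos hs _).ne'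
  simp only [hrs, mul_div_cancel_left₀ s hr.ne', real_smul]
  push_cast
  field_simp

theorem integral_ofReal_mul_exp_I_mul_sub_one {μ : Measure ℝ} {Φ : ℝ → ℝ} (hΦ : Integrable Φ μ)
    (ξ : ℝ) :
    ∫ t, (Φ t : ℂ) * (exp (I * ξ * t) - 1) ∂μ
      = (∫ t, (Φ t : ℂ) * exp (I * ξ * t) ∂μ) - ((∫ t, Φ t ∂μ : ℝ) : ℂ) := by
  have hexp : Integrable (fun t => (Φ t : ℂ) * exp (I * ξ * t)) μ :=
    hΦ.ofReal.mul_bdd (by fun_prop) (.of_forall fun t => by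
      rw [mul_assoc, ← ofReal_mul, norm_exp_I_mul_ofReal])
  simp_rw [mul_sub, mul_one]
  rw [integral_sub hexp (by exact hΦ.ofReal), integral_complex_ofReal]

theorem tendsto_rpow_smul_integral_mul_exp_I_mul_sub_one {Φ : ℝ → ℝ} {α L M z : ℝ}
    (hα0 : 0 < α) (hα1 : α < 1) (hz : 0 < z) (hΦmeas : Measurable Φ) (hΦ : ∀ x, |Φ x| ≤ M)
    (hL : Tendsto (fun x => x ^ (1 + α) * Φ x) atTop (𝓝 L)) :
    Tendsto (fun T : ℝ => (T ^ α : ℝ) •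
        ∫ t in Ioi (0 : ℝ), (Φ t : ℂ) * (exp (I * (z / T) * t) - 1))
      atTop
        (𝓝 ((z ^ α * L) • ∫ u in Ioi (0 : ℝ), (exp (I * u) - 1) / ((u ^ (1 + α) : ℝ) : ℂ))) := by
  have h := ((tendsto_rpow_smul_integral_mul_comp_div (ψ := fun u => exp (I * u) - 1)
    (by linarith) hΦmeas hΦ hL (integrableOn_Ioi_exp_I_mul_sub_one_div_rpow hα0 hα1)).comp
    (tendsto_id.atTop_div_const hz)).const_smul (z ^ α)
  rw [smul_smul] at h
  refine h.congr' ?_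
  filter_upwards [eventually_gt_atTop 0] with T hT
  rw [Function.comp_apply, id, smul_smul, ← Real.mul_rpow hz.le (div_pos hT hz).le,
    mul_div_cancel₀ T hz.ne']
  refine congrArg _ (setIntegral_congr_fun measurableSet_Ioi fun t _ => ?_)
  push_cast
  field_simp

/-- Fourier asymptotics of a heavy-tailed Hawkes kernel shape. If
`Φ ≥ 0` is bounded, measurable, integrable with `x^{1+α}Φ(x) → αc^α`, then for
fixed `z > 0`, `T^α ∫₀^∞ Φ(t)(e^{itz/T}−1)dt → θ(1+α)·α·(cz)^α`, and hence if
`∫Φ = 1`, `Φ̂(z/T) = 1 + θ(1+α)α(cz/T)^α + o(T^{−α})` as `T → ∞`. -/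
theorem kernel_fourier_asymptotics
    (α c : ℝ) (hα : α ∈ Set.Ioo (0:ℝ) 1) (hc : 0 < c)
    (Φ : ℝ → ℝ)
    (hΦpos : ∀ t : ℝ, 0 ≤ Φ t)
    (hΦbdd : ∃ M : ℝ, ∀ t : ℝ, Φ t ≤ M)
    (hΦmeas : Measurable Φ)
    (hΦint : IntegrableOn Φ (Set.Ioi (0:ℝ)))
    (hΦtail : Tendsto (fun x : ℝ => x ^ (1 + α) * Φ x) atTop (nhds (α * c ^ α)))
    (θ : ℂ)
    (hθ : θ = ∫ u in Set.Ioi (0:ℝ), (Complex.exp (Complex.I * u) - 1) / (u ^ (1 + α) : ℝ))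
    (Φhat : ℝ → ℂ)
    (hΦhat : ∀ ξ : ℝ, Φhat ξ = ∫ t in Set.Ioi (0:ℝ), (Φ t : ℂ) * Complex.exp (Complex.I * ξ * t)) :
    ∀ z : ℝ, 0 < z →
      Tendsto
          (fun T : ℝ => (T ^ α : ℝ) •
            ∫ t in Set.Ioi (0:ℝ), (Φ t : ℂ) * (Complex.exp (Complex.I * (z / T) * t) - 1))
          atTop (nhds (θ * ((α * (c * z) ^ α : ℝ) : ℂ))) ∧
      ((∫ t in Set.Ioi (0:ℝ), Φ t) = 1 →
        Tendsto
          (fun T : ℝ => (T ^ α : ℝ) *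
            ‖Φhat (z / T) - 1 - θ * ((α * (c * z / T) ^ α : ℝ) : ℂ)‖)
          atTop (nhds 0)) := by
  intro z hz
  obtain ⟨hα0, hα1⟩ := hα
  obtain ⟨M, hM⟩ := hΦbdd
  have hΦabs : ∀ t, |Φ t| ≤ M := fun t => abs_le.2 ⟨by linarith [hΦpos t, hM t], hM t⟩
  have hmain : Tendsto (fun T : ℝ => (T ^ α : ℝ) •
      ∫ t in Ioi (0:ℝ), (Φ t : ℂ) * (exp (I * (z / T) * t) - 1))
      atTop (𝓝 (θ * ((α * (c * z) ^ α : ℝ) : ℂ))) := by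
    convert tendsto_rpow_smul_integral_mul_exp_I_mul_sub_one hα0 hα1 hz hΦmeas hΦabs hΦtail
      using 2
    rw [hθ, Real.mul_rpow hc.le hz.le, real_smul]
    push_cast
    ring
  refine ⟨hmain, fun hΦ1 => ?_⟩
  have hrem := (hmain.sub_const (θ * ((α * (c * z) ^ α : ℝ) : ℂ))).norm
  rw [sub_self, norm_zero] at hrem
  refine hrem.congr' ?_
  filter_upwards [eventually_gt_atTop 0] with T hT
  have hscale : (T ^ α : ℝ) • (θ * ((α * (c * z / T) ^ α : ℝ) : ℂ))
      = θ * ((α * (c * z) ^ α : ℝ) : ℂ) := by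
    rw [Real.div_rpow (by positivity) hT.le, real_smul]
    have : ((T ^ α : ℝ) : ℂ) ≠ 0 := ofReal_ne_zero.2 (Real.rpow_pos_of_pos hT α).ne'
    push_cast
    field_simp
  have hsplit : Φhat (z / T) - 1
      = ∫ t in Ioi (0:ℝ), (Φ t : ℂ) * (exp (I * (z / T) * t) - 1) := by
    rw [← ofReal_div, integral_ofReal_mul_exp_I_mul_sub_one hΦint, hΦhat, hΦ1, ofReal_one]
  rw [hsplit, ← hscale, ← smul_sub, norm_smul, Real.norm_of_nonneg (Real.rpow_nonneg hT.le α)]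
end

section
/- Let α ∈ (0,1/2), c > 0, C_μ > 0, h > 0, and let Φ : [0,∞) → [0,∞) be bounded, measurable and integrable with ∫₀^∞ Φ = 1 and x^{1+α} Φ(x) → α c^α as x → ∞; write Φ̂(ξ) = ∫₀^∞ Φ(t) e^{iξt} dt, g^h(t) = (1 − |t|/h)^+, ĝ_z^h = ∫_ℝ g^h(t) e^{izt} dt. For T ≥ 1 and a ∈ [1/2,1) define Ĉ(z) := h C_μ T^{−2α} ĝ_z^h / |1 − a Φ̂(z/T)|². Then there exists a constant C > 0, independent of T, a and z, such that |Ĉ(z)| ≤ C min(1/z², 1)(1 + |z|^{−2α}) for all T ≥ 1, a ∈ [1/2,1) and z ≠ 0. -/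
/-!
The denominator is controlled by `1 - Re Φ̂(ξ) = ∫ Φ(t) (1 - cos ξt) dt`, together with
`|1 - aΦ̂| ≥ Re(1 - aΦ̂) ≥ (1 - Re Φ̂) / 2` for `a ∈ [1/2, 1)`. Near `ξ = 0` the heavy tail
`Φ(t) ≳ t^{-1-α}` gives `1 - Re Φ̂(ξ) ≳ |ξ|^α`, by integrating over `t ∈ [1/(2|ξ|), 1/|ξ|]`; away
from `0` it is continuous, positive (as `Φ` has positive mass) and tends to `1` by the
Riemann–Lebesgue lemma, hence bounded below. So `|1 - aΦ̂(z/T)|² ≳ min(|z/T|^α, 1)²`, and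
`T^{-2α} / min(|z/T|^α, 1)² ≤ 1 + |z|^{-2α}`. Finally `ĝ^h_z = 2(1 - cos zh)/(h z²)`, which is
at most `min(4/(h z²), h)`.
-/

open MeasureTheory Filter Complex
open Set Topology Real FourierTransform

lemma norm_cexp_I_mul_mul (ξ t : ℝ) : ‖cexp (I * ξ * t)‖ = 1 := by
  rw [mul_assoc, ← ofReal_mul, norm_exp_I_mul_ofReal]

section
variable {Φ : ℝ → ℝ} {s : Set ℝ}

lemma MeasureTheory.IntegrableOn.mul_cos_mul (hΦ : IntegrableOn Φ s) (ξ : ℝ) :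
    IntegrableOn (fun t => Φ t * Real.cos (ξ * t)) s :=
  hΦ.mul_bdd (by fun_prop : Continuous fun t => Real.cos (ξ * t)).aestronglyMeasurable
    (ae_of_all _ fun t => (norm_eq_abs _).trans_le (abs_cos_le_one _))

lemma MeasureTheory.IntegrableOn.mul_one_sub_cos_mul (hΦ : IntegrableOn Φ s) (ξ : ℝ) :
    IntegrableOn (fun t => Φ t * (1 - Real.cos (ξ * t))) s := by
  simp only [mul_sub, mul_one]
  exact hΦ.sub (hΦ.mul_cos_mul ξ)

lemma MeasureTheory.IntegrableOn.ofReal_mul_cexp (hΦ : IntegrableOn Φ s) (ξ : ℝ) :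
    IntegrableOn (fun t => (Φ t : ℂ) * cexp (I * ξ * t)) s :=
  hΦ.ofReal.mul_bdd (by fun_prop : Continuous fun t : ℝ => cexp (I * ξ * t)).aestronglyMeasurable
    (ae_of_all _ fun t => (norm_cexp_I_mul_mul ξ t).le)

lemma re_setIntegral_ofReal_mul_cexp (hΦ : IntegrableOn Φ s) (ξ : ℝ) :
    (∫ t in s, (Φ t : ℂ) * cexp (I * ξ * t)).re = ∫ t in s, Φ t * Real.cos (ξ * t) := by
  rw [← RCLike.re_to_complex, ← integral_re (hΦ.ofReal_mul_cexp ξ)]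
  congr 1 with t
  rw [RCLike.re_to_complex, show I * ξ * t = ((ξ * t : ℝ) : ℂ) * I by push_cast; ring,
    re_ofReal_mul, exp_ofReal_mul_I_re]

lemma one_sub_re_setIntegral_ofReal_mul_cexp (hΦ : IntegrableOn Φ s) (hnorm : ∫ t in s, Φ t = 1)
    (ξ : ℝ) : 1 - (∫ t in s, (Φ t : ℂ) * cexp (I * ξ * t)).re =
      ∫ t in s, Φ t * (1 - Real.cos (ξ * t)) := by
  simp only [re_setIntegral_ofReal_mul_cexp hΦ, mul_sub, mul_one]
  rw [integral_sub hΦ (hΦ.mul_cos_mul ξ), hnorm]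

lemma countable_setOf_cos_mul_eq_one {ξ : ℝ} (hξ : ξ ≠ 0) :
    {t : ℝ | Real.cos (ξ * t) = 1}.Countable := by
  refine (countable_range fun n : ℤ => n * (2 * π) / ξ).mono fun t ht => ?_
  obtain ⟨n, hn⟩ := (Real.cos_eq_one_iff _).1 ht
  exact ⟨n, by simp only [hn]; field_simp⟩

theorem setIntegral_mul_one_sub_cos_pos (hΦpos : ∀ t, 0 ≤ Φ t)
    (hΦ : IntegrableOn Φ s) (hpos : 0 < ∫ t in s, Φ t) {ξ : ℝ} (hξ : ξ ≠ 0) :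
    0 < ∫ t in s, Φ t * (1 - Real.cos (ξ * t)) := by
  have hnonneg : ∀ t, 0 ≤ Φ t * (1 - Real.cos (ξ * t)) :=
    fun t => mul_nonneg (hΦpos t) (sub_nonneg.2 (Real.cos_le_one _))
  rw [setIntegral_pos_iff_support_of_nonneg_ae (ae_of_all _ hΦpos) hΦ] at hpos
  rw [setIntegral_pos_iff_support_of_nonneg_ae (ae_of_all _ hnonneg) (hΦ.mul_one_sub_cos_mul ξ)]
  have hsub : (Function.support Φ ∩ s) \ {t | Real.cos (ξ * t) = 1} ⊆
      Function.support (fun t => Φ t * (1 - Real.cos (ξ * t))) ∩ s :=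
    fun t ⟨⟨hΦt, hts⟩, hcos⟩ => ⟨mul_ne_zero hΦt (sub_ne_zero.2 (Ne.symm hcos)), hts⟩
  calc 0 < volume (Function.support Φ ∩ s) := hpos
    _ = volume ((Function.support Φ ∩ s) \ {t | Real.cos (ξ * t) = 1}) :=
      (measure_sdiff_null ((countable_setOf_cos_mul_eq_one hξ).measure_zero _)).symm
    _ ≤ _ := measure_mono hsub

end

lemma eventually_mul_rpow_neg_le_of_tendsto {Φ : ℝ → ℝ} {p L c : ℝ}
    (hΦ : Tendsto (fun x => x ^ p * Φ x) atTop (𝓝 L)) (hc : c < L) :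
    ∀ᶠ t in atTop, c * t ^ (-p) ≤ Φ t := by
  filter_upwards [hΦ.eventually (lt_mem_nhds hc), eventually_gt_atTop 0] with t ht htpos
  rw [rpow_neg htpos.le, ← div_eq_mul_inv, div_le_iff₀' (rpow_pos_of_pos htpos p)]
  exact ht.le

theorem mul_rpow_le_setIntegral_mul_one_sub_cos {Φ : ℝ → ℝ} {α δ t₀ ξ : ℝ}
    (hΦpos : ∀ t, 0 ≤ Φ t) (hΦ : IntegrableOn Φ (Ioi 0)) (hα : -1 ≤ α) (hδ : 0 ≤ δ)
    (hlow : ∀ t, t₀ ≤ t → δ * t ^ (-(1 + α)) ≤ Φ t) (hξ : ξ ≠ 0) (ht₀ : t₀ ≤ (2 * |ξ|)⁻¹) :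
    δ / (4 * π ^ 2) * |ξ| ^ α ≤ ∫ t in Ioi 0, Φ t * (1 - Real.cos (ξ * t)) := by
  have hξpos : 0 < |ξ| := abs_pos.2 hξ
  set J := Icc (2 * |ξ|)⁻¹ |ξ|⁻¹
  have hJ : J ⊆ Ioi 0 := fun t ht => (inv_pos.2 (by positivity)).trans_le ht.1
  have hpointwise : ∀ t ∈ J, δ * |ξ| ^ (1 + α) / (2 * π ^ 2) ≤ Φ t * (1 - Real.cos (ξ * t)) := by
    rintro t ⟨ht₁, ht₂⟩
    have htpos : 0 < t := hJ ⟨ht₁, ht₂⟩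
    have hξt : 1 / 2 ≤ |ξ * t| ∧ |ξ * t| ≤ 1 := by
      rw [abs_mul, abs_of_pos htpos]
      rw [inv_le_iff_one_le_mul₀ (by positivity)] at ht₁
      rw [← one_div, le_div_iff₀ hξpos] at ht₂
      constructor <;> linarith
    have hkernel : δ * |ξ| ^ (1 + α) ≤ Φ t := by
      refine le_trans ?_ (hlow t (ht₀.trans ht₁))
      gcongr
      calc |ξ| ^ (1 + α) = |ξ|⁻¹ ^ (-(1 + α)) := by
            rw [rpow_neg (inv_nonneg.2 hξpos.le), inv_rpow hξpos.le, inv_inv]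
        _ ≤ t ^ (-(1 + α)) := rpow_le_rpow_of_nonpos htpos ht₂ (by linarith)
    have hcos : 1 / (2 * π ^ 2) ≤ 1 - Real.cos (ξ * t) := by
      have hsq : 1 / 4 ≤ (ξ * t) ^ 2 := by rw [← sq_abs]; nlinarith [hξt.1]
      have := Real.cos_le_one_sub_mul_cos_sq (x := ξ * t) (by linarith [pi_gt_three])
      calc 1 / (2 * π ^ 2) = 2 / π ^ 2 * (1 / 4) := by field_simp; norm_num
        _ ≤ 2 / π ^ 2 * (ξ * t) ^ 2 := by gcongr
        _ ≤ 1 - Real.cos (ξ * t) := by linarith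
    calc δ * |ξ| ^ (1 + α) / (2 * π ^ 2) = δ * |ξ| ^ (1 + α) * (1 / (2 * π ^ 2)) := by ring
      _ ≤ Φ t * (1 - Real.cos (ξ * t)) := by gcongr; exact hΦpos t
  have hint := hΦ.mul_one_sub_cos_mul ξ
  calc δ / (4 * π ^ 2) * |ξ| ^ α = ∫ _ in J, δ * |ξ| ^ (1 + α) / (2 * π ^ 2) := by
        rw [setIntegral_const, smul_eq_mul, Real.volume_real_Icc, rpow_add hξpos, rpow_one,
          max_eq_left (by rw [sub_nonneg]; gcongr; linarith)]
        field_simp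
        ring
    _ ≤ ∫ t in J, Φ t * (1 - Real.cos (ξ * t)) :=
        setIntegral_mono_on (integrableOn_const measure_Icc_lt_top.ne) (hint.mono_set hJ)
          measurableSet_Icc hpointwise
    _ ≤ ∫ t in Ioi 0, Φ t * (1 - Real.cos (ξ * t)) :=
        setIntegral_mono_set hint
          (ae_of_all _ fun t => mul_nonneg (hΦpos t) (sub_nonneg.2 (Real.cos_le_one _)))
          hJ.eventuallyLE

lemma setIntegral_mul_cexp_eq_fourier_indicator {s : Set ℝ} (hs : MeasurableSet s) (f : ℝ → ℂ)
    (ξ : ℝ) : ∫ t in s, f t * cexp (I * ξ * t) = 𝓕 (s.indicator f) (ξ * -(2 * π)⁻¹) := by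
  rw [Real.fourier_real_eq_integral_exp_smul, ← integral_indicator hs]
  congr 1 with t
  rw [smul_eq_mul, indicator_mul_left, mul_comm]
  congr 2
  push_cast
  field_simp

theorem tendsto_setIntegral_mul_cexp_cocompact {s : Set ℝ} (hs : MeasurableSet s) (f : ℝ → ℂ) :
    Tendsto (fun ξ : ℝ => ∫ t in s, f t * cexp (I * ξ * t)) (cocompact ℝ) (𝓝 0) := by
  simp_rw [setIntegral_mul_cexp_eq_fourier_indicator hs]
  exact (Real.zero_at_infty_fourier _).comp
    (Homeomorph.mulRight₀ _ (by simp [pi_ne_zero])).map_cocompact.le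

theorem continuous_setIntegral_mul_cexp {s : Set ℝ} (hs : MeasurableSet s) {f : ℝ → ℂ}
    (hf : IntegrableOn f s) : Continuous fun ξ : ℝ => ∫ t in s, f t * cexp (I * ξ * t) := by
  simp_rw [setIntegral_mul_cexp_eq_fourier_indicator hs]
  have : Continuous (𝓕 (s.indicator f)) :=
    VectorFourier.fourierIntegral_continuous Real.continuous_fourierChar (innerSL ℝ).continuous₂
      ((integrable_indicator_iff hs).2 hf)
  fun_prop

theorem exists_pos_forall_le_of_tendsto_cocompact {X : Type*} [TopologicalSpace X] {f : X → ℝ}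
    {s : Set X} {L : ℝ} (hs : IsClosed s) (hf : ContinuousOn f s) (hpos : ∀ x ∈ s, 0 < f x)
    (hL : 0 < L) (hlim : Tendsto f (cocompact X) (𝓝 L)) : ∃ κ > 0, ∀ x ∈ s, κ ≤ f x := by
  obtain ⟨K, hK, hKf⟩ := (hasBasis_cocompact.eventually_iff).1
    (hlim.eventually (lt_mem_nhds (half_lt_self hL)))
  obtain ⟨b, hb, hbf⟩ := (hK.inter_right hs).exists_forall_le' (hf.mono inter_subset_right)
    fun x hx => hpos x hx.2
  refine ⟨min b (L / 2), lt_min hb (half_pos hL), fun x hx => ?_⟩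
  by_cases hxK : x ∈ K
  · exact (min_le_left _ _).trans (hbf x ⟨hxK, hx⟩)
  · exact (min_le_right _ _).trans (hKf hxK).le

theorem exists_pos_mul_min_rpow_le_one_sub_re_setIntegral_Ioi {Φ : ℝ → ℝ} {α δ : ℝ}
    (hΦpos : ∀ t, 0 ≤ Φ t) (hΦ : IntegrableOn Φ (Ioi 0)) (hnorm : ∫ t in Ioi 0, Φ t = 1)
    (hα : -1 ≤ α) (hδ : 0 < δ) (htail : ∀ᶠ t in atTop, δ * t ^ (-(1 + α)) ≤ Φ t) :
    ∃ κ > 0, ∀ ξ : ℝ, ξ ≠ 0 →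
      κ * min (|ξ| ^ α) 1 ≤ 1 - (∫ t in Ioi 0, (Φ t : ℂ) * cexp (I * ξ * t)).re := by
  obtain ⟨t₀, hlow⟩ := eventually_atTop.1 htail
  set F : ℝ → ℝ := fun ξ => 1 - (∫ t in Ioi 0, (Φ t : ℂ) * cexp (I * ξ * t)).re
  have hF : ∀ ξ, F ξ = ∫ t in Ioi 0, Φ t * (1 - Real.cos (ξ * t)) :=
    one_sub_re_setIntegral_ofReal_mul_cexp hΦ hnorm
  have ht₁ : 0 < max t₀ 1 := lt_max_of_lt_right one_pos
  obtain ⟨κ₂, hκ₂, hlarge⟩ : ∃ κ₂ > 0, ∀ ξ ∈ {ξ : ℝ | (max t₀ 1)⁻¹ ≤ 2 * |ξ|}, κ₂ ≤ F ξ := by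
    refine exists_pos_forall_le_of_tendsto_cocompact
      (isClosed_le continuous_const (continuous_abs.const_mul 2)) ?_ (fun ξ hξ => ?_) one_pos ?_
    · exact (continuous_const.sub (continuous_re.comp
        (continuous_setIntegral_mul_cexp measurableSet_Ioi hΦ.ofReal))).continuousOn
    · have hξ0 : ξ ≠ 0 := by
        have : (max t₀ 1)⁻¹ ≤ 2 * |ξ| := hξ
        exact abs_pos.1 (by linarith [inv_pos.2 ht₁])
      exact (hF ξ).symm ▸ setIntegral_mul_one_sub_cos_pos hΦpos hΦ (hnorm ▸ one_pos) hξ0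
    · simpa using ((continuous_re.tendsto 0).comp
        (tendsto_setIntegral_mul_cexp_cocompact measurableSet_Ioi _)).const_sub 1
  refine ⟨min (δ / (4 * π ^ 2)) κ₂, lt_min (by positivity) hκ₂, fun ξ hξ => ?_⟩
  have hmin : 0 ≤ min (|ξ| ^ α) 1 := le_min (by positivity) zero_le_one
  by_cases hsmall : t₀ ≤ (2 * |ξ|)⁻¹
  · calc min (δ / (4 * π ^ 2)) κ₂ * min (|ξ| ^ α) 1 ≤ δ / (4 * π ^ 2) * |ξ| ^ α :=
          mul_le_mul (min_le_left _ _) (min_le_left _ _) hmin (by positivity)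
      _ ≤ F ξ := (hF ξ).symm ▸ mul_rpow_le_setIntegral_mul_one_sub_cos hΦpos hΦ hα hδ.le hlow hξ
          hsmall
  · calc min (δ / (4 * π ^ 2)) κ₂ * min (|ξ| ^ α) 1 ≤ κ₂ * 1 :=
          mul_le_mul (min_le_right _ _) (min_le_right _ _) hmin hκ₂.le
      _ ≤ F ξ := by
        rw [mul_one]
        refine hlarge ξ ((inv_lt_comm₀ (by positivity) ht₁).1 ?_).le
        exact (not_le.1 hsmall).trans_le (le_max_left _ _)

lemma hasDerivAt_cexp_I_mul (z t : ℝ) :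
    HasDerivAt (fun s : ℝ => cexp (I * z * s)) (I * z * cexp (I * z * t)) t := by
  simpa [mul_comm] using ((ofRealCLM.hasDerivAt (x := t)).const_mul (I * z)).cexp

theorem intervalIntegral_affine_mul_cexp {z : ℝ} (hz : z ≠ 0) (c₀ c₁ a b : ℝ) :
    ∫ t in a..b, ((c₀ + c₁ * t : ℝ) : ℂ) * cexp (I * z * t) =
      (((c₀ + c₁ * b : ℝ) : ℂ) / (I * z) - c₁ / (I * z) ^ 2) * cexp (I * z * b) -
        (((c₀ + c₁ * a : ℝ) : ℂ) / (I * z) - c₁ / (I * z) ^ 2) * cexp (I * z * a) := by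
  have hcont : Continuous fun t : ℝ => ((c₀ + c₁ * t : ℝ) : ℂ) * cexp (I * z * t) := by fun_prop
  refine intervalIntegral.integral_eq_sub_of_hasDerivAt
    (f := fun s : ℝ => (((c₀ + c₁ * s : ℝ) : ℂ) / (I * z) - c₁ / (I * z) ^ 2) * cexp (I * z * s))
    (fun t _ => ?_) (hcont.intervalIntegrable _ _)
  have hlin : HasDerivAt (fun s : ℝ => ((c₀ + c₁ * s : ℝ) : ℂ) / (I * z) - c₁ / (I * z) ^ 2)
      (c₁ / (I * z)) t := by
    push_cast
    simpa using (((ofRealCLM.hasDerivAt (x := t)).const_mul (c₁ : ℂ)).const_add (c₀ : ℂ)).div_const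
      (I * z) |>.sub_const (c₁ / (I * z) ^ 2)
  refine (hlin.mul (hasDerivAt_cexp_I_mul z t)).congr_deriv ?_
  have hz' : (z : ℂ) ≠ 0 := ofReal_ne_zero.2 hz
  field_simp
  ring

theorem integral_tent_mul_cexp {h z : ℝ} (hh : 0 < h) (hz : z ≠ 0) :
    ∫ t, ((max (1 - |t| / h) 0 : ℝ) : ℂ) * cexp (I * z * t) =
      ((2 * (1 - Real.cos (z * h)) / (h * z ^ 2) : ℝ) : ℂ) := by
  have hsupp : Function.support (fun t : ℝ => ((max (1 - |t| / h) 0 : ℝ) : ℂ) * cexp (I * z * t))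
      ⊆ Ioc (-h) h := by
    intro t ht
    have : 0 < 1 - |t| / h := by
      by_contra hle
      exact ht (by simp [max_eq_right (not_lt.1 hle)])
    rw [sub_pos, div_lt_one hh, abs_lt] at this
    exact ⟨this.1, this.2.le⟩
  have hcont : Continuous fun t : ℝ => ((max (1 - |t| / h) 0 : ℝ) : ℂ) * cexp (I * z * t) := by
    fun_prop
  rw [← intervalIntegral.integral_eq_integral_of_support_subset hsupp,
    ← intervalIntegral.integral_add_adjacent_intervals (b := 0) (hcont.intervalIntegrable _ _)
      (hcont.intervalIntegrable _ _)]
  have hleft : ∫ t in -h..0, ((max (1 - |t| / h) 0 : ℝ) : ℂ) * cexp (I * z * t) =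
      ∫ t in -h..0, ((1 + h⁻¹ * t : ℝ) : ℂ) * cexp (I * z * t) := by
    refine intervalIntegral.integral_congr fun t ht => ?_
    rw [uIcc_of_le (by linarith)] at ht
    have : 0 ≤ 1 - |t| / h := by
      rw [sub_nonneg, div_le_one hh, abs_of_nonpos ht.2]; linarith [ht.1]
    rw [max_eq_left this, abs_of_nonpos ht.2]
    push_cast
    ring
  have hright : ∫ t in (0)..h, ((max (1 - |t| / h) 0 : ℝ) : ℂ) * cexp (I * z * t) =
      ∫ t in (0)..h, ((1 + (-h⁻¹) * t : ℝ) : ℂ) * cexp (I * z * t) := by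
    refine intervalIntegral.integral_congr fun t ht => ?_
    rw [uIcc_of_le hh.le] at ht
    have : 0 ≤ 1 - |t| / h := by
      rw [sub_nonneg, div_le_one hh, abs_of_nonneg ht.1]; exact ht.2
    rw [max_eq_left this, abs_of_nonneg ht.1]
    push_cast
    ring
  rw [hleft, hright, intervalIntegral_affine_mul_cexp hz, intervalIntegral_affine_mul_cexp hz]
  have hcos : cexp (I * z * h) + cexp (I * z * ↑(-h)) = 2 * Complex.cos (z * h) := by
    rw [two_cos]; push_cast; ring_nf
  have hz' : (z : ℂ) ≠ 0 := ofReal_ne_zero.2 hz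
  have hh' : (h : ℂ) ≠ 0 := ofReal_ne_zero.2 hh.ne'
  push_cast at hcos ⊢
  field_simp
  ring_nf at hcos ⊢
  rw [Complex.exp_zero, I_sq]
  linear_combination hcos

theorem norm_integral_tent_mul_cexp_le {h z : ℝ} (hh : 0 < h) (hz : z ≠ 0) :
    ‖∫ t, ((max (1 - |t| / h) 0 : ℝ) : ℂ) * cexp (I * z * t)‖ ≤
      max (4 / h) h * min (1 / z ^ 2) 1 := by
  rw [integral_tent_mul_cexp hh hz, norm_real, norm_of_nonneg (by have := Real.cos_le_one (z * h); positivity)]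
  rcases le_total (1 / z ^ 2) 1 with hz1 | hz1
  · rw [min_eq_left hz1]
    calc 2 * (1 - Real.cos (z * h)) / (h * z ^ 2) ≤ 4 / h * (1 / z ^ 2) := by
          rw [div_mul_div_comm, mul_one]
          gcongr
          linarith [Real.neg_one_le_cos (z * h)]
      _ ≤ max (4 / h) h * (1 / z ^ 2) := by gcongr; exact le_max_left _ _
  · rw [min_eq_right hz1, mul_one]
    calc 2 * (1 - Real.cos (z * h)) / (h * z ^ 2) ≤ 2 * ((z * h) ^ 2 / 2) / (h * z ^ 2) := by
          gcongr
          linarith [Real.one_sub_sq_div_two_le_cos (x := z * h)]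
      _ = h := by field_simp
      _ ≤ max (4 / h) h := le_max_right _ _

lemma half_one_sub_re_le_norm_one_sub_mul {a : ℝ} {w : ℂ} (ha : 1 / 2 ≤ a) (ha1 : a ≤ 1)
    (hw : w.re ≤ 1) : (1 - w.re) / 2 ≤ ‖1 - a * w‖ := by
  refine le_trans ?_ (re_le_norm _)
  simp only [sub_re, one_re, re_ofReal_mul]
  nlinarith

lemma rpow_neg_two_mul_le_one_add_mul_min_sq {α T z : ℝ} (hα : 0 ≤ α) (hT : 1 ≤ T) (hz : z ≠ 0) :
    T ^ (-(2 * α)) ≤ (1 + |z| ^ (-(2 * α))) * min (|z / T| ^ α) 1 ^ 2 := by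
  have hT0 : 0 < T := one_pos.trans_le hT
  have hz0 : 0 < |z| := abs_pos.2 hz
  rcases le_total (|z / T| ^ α) 1 with h1 | h1
  · have hsq : |z| ^ (-(2 * α)) * (|z / T| ^ α) ^ 2 = T ^ (-(2 * α)) := by
      rw [← rpow_mul_natCast (abs_nonneg _), abs_div, abs_of_pos hT0, div_eq_mul_inv,
        mul_rpow hz0.le (inv_nonneg.2 hT0.le), inv_rpow hT0.le, ← rpow_neg hT0.le, ← mul_assoc,
        ← rpow_add hz0]
      push_cast
      rw [show -(2 * α) + α * 2 = 0 by ring, rpow_zero, one_mul, mul_comm α]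
    rw [min_eq_left h1, add_mul, one_mul, hsq]
    nlinarith [sq_nonneg (|z / T| ^ α)]
  · rw [min_eq_right h1, one_pow, mul_one]
    linarith [rpow_le_one_of_one_le_of_nonpos hT (by linarith : -(2 * α) ≤ 0),
      rpow_nonneg hz0.le (-(2 * α))]

theorem hawkes_covariance_fourier_domination_general
    (α c Cμ h : ℝ) (hα : α ∈ Set.Ioo (0:ℝ) (1/2)) (hc : 0 < c) (hCμ : 0 < Cμ) (hh : 0 < h)
    (Φ : ℝ → ℝ)
    (hΦpos : ∀ t : ℝ, 0 ≤ Φ t)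
    (hΦint : IntegrableOn Φ (Set.Ioi (0:ℝ)))
    (hΦnorm : (∫ t in Set.Ioi (0:ℝ), Φ t) = 1)
    (hΦtail : Tendsto (fun x : ℝ => x ^ (1 + α) * Φ x) atTop (nhds (α * c ^ α)))
    (Φhat : ℝ → ℂ)
    (hΦhat : ∀ ξ : ℝ, Φhat ξ = ∫ t in Set.Ioi (0:ℝ), (Φ t : ℂ) * Complex.exp (Complex.I * ξ * t))
    (ghat : ℝ → ℂ)
    (hghat : ∀ z : ℝ, ghat z = ∫ t : ℝ, ((max (1 - |t| / h) 0 : ℝ) : ℂ) *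
      Complex.exp (Complex.I * z * t))
    (Chat : ℝ → ℝ → ℝ → ℂ)
    (hChat : ∀ T a z : ℝ, Chat T a z =
      ((h * Cμ * T ^ (-(2 * α)) : ℝ) : ℂ) * ghat z /
        (((‖1 - (a : ℂ) * Φhat (z / T)‖) ^ 2 : ℝ) : ℂ)) :
    ∃ C : ℝ, 0 < C ∧ ∀ T : ℝ, 1 ≤ T → ∀ a ∈ Set.Ico (1/2 : ℝ) 1, ∀ z : ℝ, z ≠ 0 →
      ‖Chat T a z‖ ≤ C * min (1 / z ^ 2) 1 * (1 + |z| ^ (-(2 * α))) := by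
  have hα0 : 0 < α := hα.1
  obtain ⟨κ, hκ, hden⟩ := exists_pos_mul_min_rpow_le_one_sub_re_setIntegral_Ioi hΦpos hΦint
    hΦnorm (by linarith) (by positivity)
    (eventually_mul_rpow_neg_le_of_tendsto hΦtail (half_lt_self (by positivity)))
  refine ⟨h * Cμ * (4 / κ ^ 2) * max (4 / h) h, by positivity, fun T hT a ha z hz => ?_⟩
  have hT0 : 0 < T := one_pos.trans_le hT
  have hzT : z / T ≠ 0 := div_ne_zero hz hT0.ne'
  set m := min (|z / T| ^ α) 1
  have hm : 0 < m := lt_min (rpow_pos_of_pos (abs_pos.2 hzT) α) one_pos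
  have hre := hΦhat (z / T) ▸ hden (z / T) hzT
  have hD : κ * m / 2 ≤ ‖1 - (a : ℂ) * Φhat (z / T)‖ :=
    (div_le_div_of_nonneg_right hre zero_le_two).trans
      (half_one_sub_re_le_norm_one_sub_mul ha.1 ha.2.le (by nlinarith))
  rw [hChat, norm_div, norm_mul, norm_real, norm_real, norm_of_nonneg (by positivity),
    norm_of_nonneg (by positivity)]
  calc h * Cμ * T ^ (-(2 * α)) * ‖ghat z‖ / ‖1 - (a : ℂ) * Φhat (z / T)‖ ^ 2
      ≤ h * Cμ * ((1 + |z| ^ (-(2 * α))) * m ^ 2) * (max (4 / h) h * min (1 / z ^ 2) 1) /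
          (κ * m / 2) ^ 2 := by
        gcongr
        · exact rpow_neg_two_mul_le_one_add_mul_min_sq hα0.le hT hz
        · exact hghat z ▸ norm_integral_tent_mul_cexp_le hh hz
    _ = h * Cμ * (4 / κ ^ 2) * max (4 / h) h * min (1 / z ^ 2) 1 * (1 + |z| ^ (-(2 * α))) := by
        field_simp
        ring

/-- uniform domination of the Fourier transform of the autocovariance
of `h`-increments of the renormalized nearly unstable Hawkes process:
`|h C_μ T^{−2α} ĝ_z^h / |1 − aΦ̂(z/T)|²| ≤ C min(1/z²,1)(1+|z|^{−2α})` uniformly in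
`T ≥ 1`, `a ∈ [1/2,1)` and `z ≠ 0`. -/
theorem hawkes_covariance_fourier_domination
    (α c Cμ h : ℝ) (hα : α ∈ Set.Ioo (0:ℝ) (1/2)) (hc : 0 < c) (hCμ : 0 < Cμ) (hh : 0 < h)
    (Φ : ℝ → ℝ)
    (hΦpos : ∀ t : ℝ, 0 ≤ Φ t)
    (hΦbdd : ∃ M : ℝ, ∀ t : ℝ, Φ t ≤ M)
    (hΦmeas : Measurable Φ)
    (hΦint : IntegrableOn Φ (Set.Ioi (0:ℝ)))
    (hΦnorm : (∫ t in Set.Ioi (0:ℝ), Φ t) = 1)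
    (hΦtail : Tendsto (fun x : ℝ => x ^ (1 + α) * Φ x) atTop (nhds (α * c ^ α)))
    (Φhat : ℝ → ℂ)
    (hΦhat : ∀ ξ : ℝ, Φhat ξ = ∫ t in Set.Ioi (0:ℝ), (Φ t : ℂ) * Complex.exp (Complex.I * ξ * t))
    (ghat : ℝ → ℂ)
    (hghat : ∀ z : ℝ, ghat z = ∫ t : ℝ, ((max (1 - |t| / h) 0 : ℝ) : ℂ) *
      Complex.exp (Complex.I * z * t))
    (Chat : ℝ → ℝ → ℝ → ℂ)
    (hChat : ∀ T a z : ℝ, Chat T a z =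
      ((h * Cμ * T ^ (-(2 * α)) : ℝ) : ℂ) * ghat z /
        (((‖1 - (a : ℂ) * Φhat (z / T)‖) ^ 2 : ℝ) : ℂ)) :
    ∃ C : ℝ, 0 < C ∧ ∀ T : ℝ, 1 ≤ T → ∀ a ∈ Set.Ico (1/2 : ℝ) 1, ∀ z : ℝ, z ≠ 0 →
      ‖Chat T a z‖ ≤ C * min (1 / z ^ 2) 1 * (1 + |z| ^ (-(2 * α))) :=
  hawkes_covariance_fourier_domination_general α c Cμ h hα hc hCμ hh Φ hΦpos hΦint hΦnorm hΦtail
    Φhat hΦhat ghat hghat Chat hChat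
end

section
/- Let α ∈ (0,1/2), c > 0, C_μ > 0, h > 0, and let Φ : [0,∞) → [0,∞) be bounded, measurable and integrable with ∫₀^∞ Φ = 1 and x^{1+α} Φ(x) → α c^α as x → ∞; write Φ̂(ξ) = ∫₀^∞ Φ(t) e^{iξt} dt, ĝ_z^h = ∫_ℝ (1 − |t|/h)^+ e^{izt} dt, and let (a_T) ⊂ (0,1) satisfy T^α (1 − a_T) → 0 as T → ∞. Then for every fixed z > 0, lim_{T→∞} h C_μ T^{−2α} ĝ_z^h / |1 − a_T Φ̂(z/T)|² = h C_μ ĝ_z^h / (|θ(1+α)|² α² c^{2α} z^{2α}), where θ(1+α) = ∫₀^∞ (e^{iu} − 1) u^{−(1+α)} du. -/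
/-! Substituting `u = ξ t` gives `ξ^{-α} (Φ̂(ξ) - 1) = ∫₀^∞ g(u/ξ) (e^{iu} - 1) u^{-(1+α)} du`
with `g(x) = x^{1+α} Φ(x)`. As `g` is bounded on `(0, ∞)` and tends to `α c^α`, dominated
convergence gives `ξ^{-α} (Φ̂(ξ) - 1) → α c^α θ` as `ξ → 0⁺`. Taking `ξ = z/T` and using
`1 - a_T = o(T^{-α})`, `T^α (1 - a_T Φ̂(z/T)) → -z^α α c^α θ`, which is nonzero because
`Re θ = ∫₀^∞ (cos u - 1) u^{-(1+α)} du < 0`; the factor `T^{-2α}` is exactly `|T^α|^{-2}`. -/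

open MeasureTheory Filter Complex Set Topology

lemma norm_exp_I_mul_ofReal_sub_one_le_two_mul_min (x : ℝ) :
    ‖exp (I * x) - 1‖ ≤ 2 * min |x| 1 := by
  rw [mul_min_of_nonneg _ _ zero_le_two, mul_one]
  refine le_min ?_ ?_
  · have := Real.norm_exp_I_mul_ofReal_sub_one_le (x := x)
    rw [Real.norm_eq_abs] at this
    linarith [abs_nonneg x]
  · calc ‖exp (I * x) - 1‖ ≤ ‖exp (I * x)‖ + ‖(1 : ℂ)‖ := norm_sub_le _ _
      _ = 2 := by rw [norm_exp_I_mul_ofReal, norm_one]; norm_num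

lemma integrableOn_min_one_mul_rpow_neg {α : ℝ} (h0 : 0 < α) (h1 : α < 1) :
    IntegrableOn (fun u : ℝ => min u 1 * u ^ (-(1 + α))) (Ioi 0) := by
  rw [← Ioc_union_Ioi_eq_Ioi zero_le_one, integrableOn_union]
  constructor
  · have hint : IntegrableOn (fun u : ℝ => u ^ (-α)) (Ioc 0 1) :=
      ((intervalIntegral.integrableOn_Ioo_rpow_iff (s := -α) one_pos).2
        (by linarith)).congr_set_ae Ioo_ae_eq_Ioc.symm
    refine hint.congr_fun (fun u hu => ?_) measurableSet_Ioc
    rw [min_eq_left hu.2, ← Real.rpow_one_add' hu.1.le (show (1 : ℝ) + -(1 + α) ≠ 0 by linarith)]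
    norm_num
  · refine (integrableOn_Ioi_rpow_of_lt (show -(1 + α) < -1 by linarith) one_pos).congr_fun
      (fun u hu => ?_) measurableSet_Ioi
    rw [min_eq_right (le_of_lt hu), one_mul]

lemma integrableOn_exp_I_mul_sub_one_div_rpow {α : ℝ} (h0 : 0 < α) (h1 : α < 1) :
    IntegrableOn (fun u : ℝ => (exp (I * u) - 1) / ((u ^ (1 + α) : ℝ) : ℂ)) (Ioi 0) := by
  refine ((integrableOn_min_one_mul_rpow_neg h0 h1).const_mul 2).mono'
    (Measurable.aestronglyMeasurable (by fun_prop)) ?_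
  filter_upwards [ae_restrict_mem measurableSet_Ioi] with u (hu : 0 < u)
  rw [norm_div, Complex.norm_real, Real.norm_of_nonneg (by positivity), div_eq_mul_inv,
    ← Real.rpow_neg hu.le, ← mul_assoc]
  gcongr
  simpa [abs_of_pos hu] using norm_exp_I_mul_ofReal_sub_one_le_two_mul_min u

lemma re_integral_exp_I_mul_sub_one_div_rpow_neg {α : ℝ} (h0 : 0 < α) (h1 : α < 1) :
    (∫ u in Ioi (0 : ℝ), (exp (I * u) - 1) / ((u ^ (1 + α) : ℝ) : ℂ)).re < 0 := by
  have hre : ∀ u : ℝ, ((exp (I * u) - 1) / ((u ^ (1 + α) : ℝ) : ℂ)).re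
      = -((1 - Real.cos u) / u ^ (1 + α)) := by
    intro u
    simp [Complex.exp_re]
    ring
  rw [← RCLike.re_to_complex, ← integral_re (integrableOn_exp_I_mul_sub_one_div_rpow h0 h1)]
  simp only [RCLike.re_to_complex, hre, integral_neg, neg_lt_zero]
  have hint : IntegrableOn (fun u : ℝ => (1 - Real.cos u) / u ^ (1 + α)) (Ioi 0) := by
    simpa [IntegrableOn, hre] using (integrableOn_exp_I_mul_sub_one_div_rpow h0 h1).re.neg
  have hnonneg : 0 ≤ᵐ[volume.restrict (Ioi 0)] fun u : ℝ => (1 - Real.cos u) / u ^ (1 + α) := by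
    filter_upwards [ae_restrict_mem measurableSet_Ioi] with u (hu : 0 < u)
    exact div_nonneg (by linarith [Real.cos_le_one u]) (by positivity)
  rw [setIntegral_pos_iff_support_of_nonneg_ae hnonneg hint]
  have hsub : Ioo 0 (2 * Real.pi) ⊆
      (Function.support fun u : ℝ => (1 - Real.cos u) / u ^ (1 + α)) ∩ Ioi 0 := by
    rintro u ⟨hu0, hu2π⟩
    have hcos : Real.cos u ≠ 1 := fun h =>
      hu0.ne' ((Real.cos_eq_one_iff_of_lt_of_lt (by linarith [Real.pi_pos]) hu2π).1 h)
    refine ⟨div_ne_zero (sub_ne_zero.2 hcos.symm) (by positivity), hu0⟩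
  exact (Measure.measure_Ioo_pos _ |>.2 Real.two_pi_pos).trans_le (measure_mono hsub)

lemma exists_abs_rpow_mul_le_of_tendsto_s12 {f : ℝ → ℝ} {p L M : ℝ} (hp : 0 ≤ p)
    (hM : ∀ x, |f x| ≤ M) (hf : Tendsto (fun x => x ^ p * f x) atTop (𝓝 L)) :
    ∃ K, ∀ x, 0 < x → |x ^ p * f x| ≤ K := by
  obtain ⟨R, hR⟩ := (Metric.tendsto_atTop.1 hf) 1 one_pos
  refine ⟨max (R ^ p * M) (|L| + 1), fun x hx => ?_⟩
  rcases le_total x R with hxR | hRx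
  · refine le_max_of_le_left ?_
    rw [abs_mul, abs_of_pos (Real.rpow_pos_of_pos hx p)]
    exact mul_le_mul (Real.rpow_le_rpow hx.le hxR hp) (hM x) (abs_nonneg _)
      (Real.rpow_nonneg (hx.le.trans hxR) p)
  · refine le_max_of_le_right ?_
    have := hR x hRx
    rw [Real.dist_eq] at this
    linarith [abs_sub_abs_le_abs_sub (x ^ p * f x) L]

lemma tendsto_setIntegral_smul_comp_div {E : Type*} [NormedAddCommGroup E] [NormedSpace ℝ E]
    {k : ℝ → E} {g : ℝ → ℝ} {K L : ℝ} (hk : IntegrableOn k (Ioi 0)) (hg : Measurable g)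
    (hgK : ∀ x, 0 < x → |g x| ≤ K) (hgL : Tendsto g atTop (𝓝 L)) :
    Tendsto (fun ξ => ∫ u in Ioi (0 : ℝ), g (u / ξ) • k u) (𝓝[>] 0)
      (𝓝 (L • ∫ u in Ioi (0 : ℝ), k u)) := by
  rw [← integral_smul]
  refine tendsto_integral_filter_of_dominated_convergence (fun u => K * ‖k u‖) ?_ ?_
    (hk.norm.const_mul K) ?_
  · exact Eventually.of_forall fun ξ =>
      (hg.comp (measurable_id.div_const ξ)).aestronglyMeasurable.smul hk.aestronglyMeasurable
  · filter_upwards [self_mem_nhdsWithin] with ξ (hξ : 0 < ξ)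
    filter_upwards [ae_restrict_mem measurableSet_Ioi] with u (hu : 0 < u)
    rw [norm_smul, Real.norm_eq_abs]
    exact mul_le_mul_of_nonneg_right (hgK _ (div_pos hu hξ)) (norm_nonneg _)
  · filter_upwards [ae_restrict_mem measurableSet_Ioi] with u (hu : 0 < u)
    have hdiv : Tendsto (fun ξ : ℝ => u / ξ) (𝓝[>] 0) atTop := by
      simpa only [div_eq_mul_inv] using tendsto_inv_nhdsGT_zero.const_mul_atTop hu
    exact (hgL.comp hdiv).smul_const (k u)

lemma rpow_neg_mul_fourier_sub_one_eq {Φ : ℝ → ℝ} (hΦint : IntegrableOn Φ (Ioi 0))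
    (hΦnorm : ∫ t in Ioi (0 : ℝ), Φ t = 1) (α : ℝ) {ξ : ℝ} (hξ : 0 < ξ) :
    ((ξ ^ (-α) : ℝ) : ℂ) * ((∫ t in Ioi (0 : ℝ), (Φ t : ℂ) * exp (I * ξ * t)) - 1) =
      ∫ u in Ioi (0 : ℝ), ((u / ξ) ^ (1 + α) * Φ (u / ξ)) •
        ((exp (I * u) - 1) / ((u ^ (1 + α) : ℝ) : ℂ)) := by
  have hΦC : IntegrableOn (fun t => (Φ t : ℂ)) (Ioi 0) := hΦint.ofReal
  have hcentered : (∫ t in Ioi (0 : ℝ), (Φ t : ℂ) * exp (I * ξ * t)) - 1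
      = ∫ t in Ioi (0 : ℝ), (Φ t : ℂ) * (exp (I * ↑(ξ * t)) - 1) := by
    have hexp : IntegrableOn (fun t : ℝ => (Φ t : ℂ) * exp (I * ξ * t)) (Ioi 0) :=
      hΦC.mul_bdd (Continuous.aestronglyMeasurable (by fun_prop))
        (Eventually.of_forall fun t => by
          rw [mul_assoc, ← ofReal_mul, norm_exp_I_mul_ofReal])
    have hone : ∫ t in Ioi (0 : ℝ), (Φ t : ℂ) = 1 := by
      rw [integral_complex_ofReal, hΦnorm, ofReal_one]
    conv_lhs => rw [← hone, ← integral_sub hexp hΦC]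
    simp only [ofReal_mul, mul_sub, mul_one, mul_assoc]
  have hsubst := integral_comp_mul_left_Ioi (fun u => (Φ (u / ξ) : ℂ) * (exp (I * u) - 1)) 0 hξ
  simp only [mul_div_cancel_left₀ _ hξ.ne', mul_zero] at hsubst
  rw [hcentered, hsubst, real_smul, ← mul_assoc, ← ofReal_mul, ← integral_const_mul]
  refine setIntegral_congr_fun measurableSet_Ioi fun u (hu : 0 < u) => ?_
  have hscale : ξ ^ (-α) * ξ⁻¹ = (u / ξ) ^ (1 + α) / u ^ (1 + α) := by
    rw [Real.div_rpow hu.le hξ.le, Real.rpow_neg hξ.le, Real.rpow_add hξ, Real.rpow_one]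
    field_simp
  simp only [real_smul, hscale]
  push_cast
  ring

theorem tendsto_rpow_neg_mul_fourier_sub_one {α L M : ℝ} (h0 : 0 < α) (h1 : α < 1)
    {Φ : ℝ → ℝ} (hΦM : ∀ t, |Φ t| ≤ M) (hΦmeas : Measurable Φ)
    (hΦint : IntegrableOn Φ (Ioi 0)) (hΦnorm : ∫ t in Ioi (0 : ℝ), Φ t = 1)
    (hΦtail : Tendsto (fun x : ℝ => x ^ (1 + α) * Φ x) atTop (𝓝 L)) :
    Tendsto (fun ξ : ℝ =>
        ((ξ ^ (-α) : ℝ) : ℂ) * ((∫ t in Ioi (0 : ℝ), (Φ t : ℂ) * exp (I * ξ * t)) - 1))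
      (𝓝[>] 0) (𝓝 (L • ∫ u in Ioi (0 : ℝ), (exp (I * u) - 1) / ((u ^ (1 + α) : ℝ) : ℂ))) := by
  obtain ⟨K, hK⟩ := exists_abs_rpow_mul_le_of_tendsto_s12 (by linarith) hΦM hΦtail
  refine (tendsto_setIntegral_smul_comp_div (integrableOn_exp_I_mul_sub_one_div_rpow h0 h1)
    (by fun_prop) hK hΦtail).congr' ?_
  filter_upwards [self_mem_nhdsWithin] with ξ hξ
  exact (rpow_neg_mul_fourier_sub_one_eq hΦint hΦnorm α hξ).symm

lemma tendsto_nhds_one_of_tendsto_rpow_mul_one_sub {α : ℝ} {a : ℝ → ℝ} (hα : 0 < α)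
    (haT : Tendsto (fun T : ℝ => T ^ α * (1 - a T)) atTop (𝓝 0)) :
    Tendsto a atTop (𝓝 1) := by
  have hsub := ((tendsto_rpow_neg_atTop hα).mul haT).neg
  rw [zero_mul, neg_zero] at hsub
  refine tendsto_sub_nhds_zero_iff.1 (hsub.congr' ?_)
  filter_upwards [eventually_gt_atTop 0] with T hT
  rw [← mul_assoc, ← Real.rpow_add hT, neg_add_cancel, Real.rpow_zero]
  ring

lemma tendsto_rpow_mul_one_sub_mul_comp_div {α z : ℝ} {ℓ : ℂ} {F : ℝ → ℂ} {a : ℝ → ℝ}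
    (hα : 0 < α) (hz : 0 < z)
    (hF : Tendsto (fun ξ : ℝ => ((ξ ^ (-α) : ℝ) : ℂ) * (F ξ - 1)) (𝓝[>] 0) (𝓝 ℓ))
    (haT : Tendsto (fun T : ℝ => T ^ α * (1 - a T)) atTop (𝓝 0)) :
    Tendsto (fun T : ℝ => ((T ^ α : ℝ) : ℂ) * (1 - a T * F (z / T))) atTop
      (𝓝 (-(((z ^ α : ℝ) : ℂ) * ℓ))) := by
  have hzT : Tendsto (fun T : ℝ => z / T) atTop (𝓝[>] 0) :=
    tendsto_nhdsWithin_iff.2 ⟨tendsto_const_nhds.div_atTop tendsto_id,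
      (eventually_gt_atTop 0).mono fun T hT => div_pos hz hT⟩
  have hlim := ((continuous_ofReal.tendsto 0).comp haT).sub
    (((continuous_ofReal.tendsto 1).comp
      (tendsto_nhds_one_of_tendsto_rpow_mul_one_sub hα haT)).mul
      ((hF.comp hzT).const_mul ((z ^ α : ℝ) : ℂ)))
  simp only [Function.comp_def, ofReal_zero, ofReal_one, zero_sub, one_mul] at hlim
  refine hlim.congr' ?_
  filter_upwards [eventually_gt_atTop 0] with T hT
  have hpow : z ^ α * (z / T) ^ (-α) = T ^ α := by
    rw [Real.rpow_neg (div_pos hz hT).le, Real.div_rpow hz.le hT.le]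
    field_simp
  have hpowC := congrArg ofReal hpow
  push_cast at hpowC ⊢
  -- `T^α (1 - a F) = T^α (1 - a) - a z^α [(z/T)^{-α} (F - 1)]` once `z^α (z/T)^{-α} = T^α`
  linear_combination (-(a T : ℂ) * (F (z / T) - 1)) * hpowC

lemma tendsto_mul_rpow_neg_two_mul_div_norm_sq {α C : ℝ} {g w : ℂ} {v : ℝ → ℂ}
    (hv : Tendsto (fun T : ℝ => ((T ^ α : ℝ) : ℂ) * v T) atTop (𝓝 w)) (hw : w ≠ 0) :
    Tendsto (fun T : ℝ => ((C * T ^ (-(2 * α)) : ℝ) : ℂ) * g / ((‖v T‖ ^ 2 : ℝ) : ℂ)) atTop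
      (𝓝 (((C / ‖w‖ ^ 2 : ℝ) : ℂ) * g)) := by
  have hquot := (tendsto_const_nhds (x := C)).div (hv.norm.pow 2) (by positivity)
  refine (((continuous_ofReal.tendsto _).comp hquot).mul_const g).congr' ?_
  filter_upwards [eventually_gt_atTop 0] with T hT
  rw [Function.comp_apply, Pi.div_apply, norm_mul, norm_real, Real.norm_of_nonneg (by positivity),
    mul_pow, show -(2 * α) = -(α + α) by ring, Real.rpow_neg hT.le, Real.rpow_add hT, ← sq]
  push_cast
  rw [div_eq_mul_inv, div_eq_mul_inv, mul_inv]
  ring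

theorem hawkes_covariance_fourier_limit_general
    (α c Cμ h : ℝ) (hα : α ∈ Set.Ioo (0:ℝ) (1/2)) (hc : 0 < c)
    (Φ : ℝ → ℝ)
    (hΦpos : ∀ t : ℝ, 0 ≤ Φ t)
    (hΦbdd : ∃ M : ℝ, ∀ t : ℝ, Φ t ≤ M)
    (hΦmeas : Measurable Φ)
    (hΦint : IntegrableOn Φ (Set.Ioi (0:ℝ)))
    (hΦnorm : (∫ t in Set.Ioi (0:ℝ), Φ t) = 1)
    (hΦtail : Tendsto (fun x : ℝ => x ^ (1 + α) * Φ x) atTop (nhds (α * c ^ α)))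
    (Φhat : ℝ → ℂ)
    (hΦhat : ∀ ξ : ℝ, Φhat ξ = ∫ t in Set.Ioi (0:ℝ), (Φ t : ℂ) * Complex.exp (Complex.I * ξ * t))
    (ghat : ℝ → ℂ)
    (θ : ℂ)
    (hθ : θ = ∫ u in Set.Ioi (0:ℝ), (Complex.exp (Complex.I * u) - 1) / (u ^ (1 + α) : ℝ))
    (a : ℝ → ℝ)
    (haT : Tendsto (fun T : ℝ => T ^ α * (1 - a T)) atTop (nhds 0)) :
    ∀ z : ℝ, 0 < z →
      Tendsto
        (fun T : ℝ =>
          ((h * Cμ * T ^ (-(2 * α)) : ℝ) : ℂ) * ghat z /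
            ((‖1 - (a T : ℂ) * Φhat (z / T)‖ ^ 2 : ℝ) : ℂ))
        atTop
        (nhds (((h * Cμ / (‖θ‖ ^ 2 * α ^ 2 * c ^ (2 * α) * z ^ (2 * α)) : ℝ) : ℂ)
          * ghat z)) := by
  intro z hz
  obtain ⟨hα0, hα2⟩ := hα
  have hα1 : α < 1 := by linarith
  obtain ⟨M, hM⟩ := hΦbdd
  have hθ0 : θ ≠ 0 := by
    rintro rfl
    simpa [← hθ] using re_integral_exp_I_mul_sub_one_div_rpow_neg hα0 hα1
  have hfourier : Tendsto (fun ξ : ℝ => ((ξ ^ (-α) : ℝ) : ℂ) * (Φhat ξ - 1)) (𝓝[>] 0)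
      (𝓝 ((α * c ^ α) • θ)) := by
    simp only [hΦhat, hθ]
    exact tendsto_rpow_neg_mul_fourier_sub_one hα0 hα1
      (fun t => (abs_of_nonneg (hΦpos t)).trans_le (hM t)) hΦmeas hΦint hΦnorm hΦtail
  have hden := tendsto_rpow_mul_one_sub_mul_comp_div hα0 hz hfourier haT
  have hlim_ne : -(((z ^ α : ℝ) : ℂ) * ((α * c ^ α) • θ)) ≠ 0 := by
    simp [hθ0, hα0.ne', (Real.rpow_pos_of_pos hc α).ne', (Real.rpow_pos_of_pos hz α).ne']
  convert tendsto_mul_rpow_neg_two_mul_div_norm_sq hden hlim_ne using 5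
  rw [norm_neg, norm_mul, norm_smul, norm_real, Real.norm_eq_abs, Real.norm_eq_abs,
    abs_of_pos (by positivity), abs_of_pos (by positivity), show 2 * α = α + α by ring,
    Real.rpow_add hc, Real.rpow_add hz]
  ring

/-- pointwise limit of the Fourier transform of the autocovariance of
`h`-increments of the renormalized nearly unstable Hawkes process. If
`T^α(1 − a_T) → 0`, then for fixed `z > 0`,
`h C_μ T^{−2α} ĝ_z^h / |1 − a_T Φ̂(z/T)|² → h C_μ ĝ_z^h / (|θ(1+α)|² α² c^{2α} z^{2α})`. -/
theorem hawkes_covariance_fourier_limit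
    (α c Cμ h : ℝ) (hα : α ∈ Set.Ioo (0:ℝ) (1/2)) (hc : 0 < c) (hCμ : 0 < Cμ) (hh : 0 < h)
    (Φ : ℝ → ℝ)
    (hΦpos : ∀ t : ℝ, 0 ≤ Φ t)
    (hΦbdd : ∃ M : ℝ, ∀ t : ℝ, Φ t ≤ M)
    (hΦmeas : Measurable Φ)
    (hΦint : IntegrableOn Φ (Set.Ioi (0:ℝ)))
    (hΦnorm : (∫ t in Set.Ioi (0:ℝ), Φ t) = 1)
    (hΦtail : Tendsto (fun x : ℝ => x ^ (1 + α) * Φ x) atTop (nhds (α * c ^ α)))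
    (Φhat : ℝ → ℂ)
    (hΦhat : ∀ ξ : ℝ, Φhat ξ = ∫ t in Set.Ioi (0:ℝ), (Φ t : ℂ) * Complex.exp (Complex.I * ξ * t))
    (ghat : ℝ → ℂ)
    (hghat : ∀ z : ℝ, ghat z = ∫ t : ℝ, ((max (1 - |t| / h) 0 : ℝ) : ℂ) *
      Complex.exp (Complex.I * z * t))
    (θ : ℂ)
    (hθ : θ = ∫ u in Set.Ioi (0:ℝ), (Complex.exp (Complex.I * u) - 1) / (u ^ (1 + α) : ℝ))
    (a : ℝ → ℝ)
    (ha : ∀ T : ℝ, a T ∈ Set.Ioo (0:ℝ) 1)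
    (haT : Tendsto (fun T : ℝ => T ^ α * (1 - a T)) atTop (nhds 0)) :
    ∀ z : ℝ, 0 < z →
      Tendsto
        (fun T : ℝ =>
          ((h * Cμ * T ^ (-(2 * α)) : ℝ) : ℂ) * ghat z /
            ((‖1 - (a T : ℂ) * Φhat (z / T)‖ ^ 2 : ℝ) : ℂ))
        atTop
        (nhds (((h * Cμ / (‖θ‖ ^ 2 * α ^ 2 * c ^ (2 * α) * z ^ (2 * α)) : ℝ) : ℂ)
          * ghat z)) :=
  hawkes_covariance_fourier_limit_general α c Cμ h hα hc Φ hΦpos hΦbdd hΦmeas hΦint hΦnorm hΦtail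
    Φhat hΦhat ghat θ hθ a haT
end

section
/- Let α ∈ (0,1/2), h > 0 and set H := 1/2 + α. Then for every t ∈ ℝ, ∫_ℝ (1 − |t−s|/h)^+ · |s|^{2α−1} ds = (|t+h|^{2H} + |t−h|^{2H} − 2|t|^{2H}) / (2H(2H−1)h). -/
/-!
Write `q = 2H > 1`. Off the origin, `|x| ^ (q - 2)` is `F'' / (q (q - 1))` for `F x = |x| ^ q`,
whose derivative `F' x = q |x| ^ (q - 2) x` is continuous. On each half of its support the
triangle `(1 - |t - s| / h)⁺` is an affine weight `w`, and `w F'' = (w F' - w' F)'` off the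
origin, so the fundamental theorem of calculus turns the convolution into the second difference
`(F (t + h) + F (t - h) - 2 F t) / h`.
-/

open MeasureTheory Set

noncomputable def triangle (h u : ℝ) : ℝ := max (1 - |u| / h) 0

section Triangle

variable {h : ℝ}

theorem continuous_triangle (h : ℝ) : Continuous (triangle h) := by
  unfold triangle; fun_prop

theorem triangle_of_abs_le (hh : 0 < h) {u : ℝ} (hu : |u| ≤ h) : triangle h u = 1 - |u| / h :=
  max_eq_left (by rw [sub_nonneg, div_le_one hh]; exact hu)

theorem triangle_of_le_abs (hh : 0 < h) {u : ℝ} (hu : h ≤ |u|) : triangle h u = 0 :=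
  max_eq_right (by rw [sub_nonpos, one_le_div hh]; exact hu)

theorem integral_triangle_mul_eq_intervalIntegral (hh : 0 < h) (f : ℝ → ℝ) (t : ℝ) :
    ∫ s, triangle h (t - s) * f s = ∫ s in (t - h)..(t + h), triangle h (t - s) * f s := by
  rw [intervalIntegral.integral_of_le (by linarith)]
  refine (setIntegral_eq_integral_of_forall_compl_eq_zero fun s hs => ?_).symm
  rw [triangle_of_le_abs hh, zero_mul]
  rw [mem_Ioc, not_and_or, not_lt, not_le] at hs
  rcases hs with hs | hs
  · exact (le_abs_self _).trans' (by linarith)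
  · exact (neg_le_abs _).trans' (by linarith)

end Triangle

section SecondDifference

variable {F G g : ℝ → ℝ} {S : Set ℝ}

theorem integral_affine_mul_eq_of_hasDerivAt (hF : ∀ x, HasDerivAt F (G x) x)
    (hGc : Continuous G) (hS : S.Countable) (hG : ∀ x ∉ S, HasDerivAt G (g x) x)
    {a b : ℝ} (hg : IntervalIntegrable g volume a b) (c d : ℝ) :
    ∫ x in a..b, (c * x + d) * g x =
      (c * b + d) * G b - c * F b - ((c * a + d) * G a - c * F a) := by
  have hFc : Continuous F := continuous_iff_continuousAt.2 fun x => (hF x).continuousAt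
  refine integral_eq_of_hasDerivAt_off_countable (fun x => (c * x + d) * G x - c * F x) _ hS
    (by fun_prop) (fun x hx => ?_) (hg.continuousOn_mul (by fun_prop))
  refine ((((hasDerivAt_id x).const_mul c).add_const d).mul (hG x hx.2)).sub
    ((hF x).const_mul c) |>.congr_deriv ?_
  simp only [id]; ring

theorem integral_triangle_mul_eq_of_hasDerivAt (hF : ∀ x, HasDerivAt F (G x) x)
    (hGc : Continuous G) (hS : S.Countable) (hG : ∀ x ∉ S, HasDerivAt G (g x) x)
    {h : ℝ} (hh : 0 < h) (t : ℝ) (hg : IntervalIntegrable g volume (t - h) (t + h)) :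
    ∫ s, triangle h (t - s) * g s = (F (t + h) + F (t - h) - 2 * F t) / h := by
  have ht : t ∈ uIcc (t - h) (t + h) := mem_uIcc_of_le (by linarith) (by linarith)
  have hg₁ : IntervalIntegrable g volume (t - h) t :=
    hg.mono_set (uIcc_subset_uIcc left_mem_uIcc ht)
  have hg₂ : IntervalIntegrable g volume t (t + h) :=
    hg.mono_set (uIcc_subset_uIcc ht right_mem_uIcc)
  have hleft : ∫ s in (t - h)..t, triangle h (t - s) * g s =
      ∫ s in (t - h)..t, (1 / h * s + (1 - t / h)) * g s := by
    refine intervalIntegral.integral_congr fun s hs => ?_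
    rw [uIcc_of_le (by linarith), mem_Icc] at hs
    rw [triangle_of_abs_le hh (by rw [abs_of_nonneg] <;> linarith), abs_of_nonneg (by linarith)]
    field_simp; ring
  have hright : ∫ s in t..(t + h), triangle h (t - s) * g s =
      ∫ s in t..(t + h), (-1 / h * s + (1 + t / h)) * g s := by
    refine intervalIntegral.integral_congr fun s hs => ?_
    rw [uIcc_of_le (by linarith), mem_Icc] at hs
    rw [triangle_of_abs_le hh (by rw [abs_of_nonpos] <;> linarith), abs_of_nonpos (by linarith)]
    field_simp; ring
  have htri : Continuous fun s => triangle h (t - s) := (continuous_triangle h).comp (by fun_prop)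
  rw [integral_triangle_mul_eq_intervalIntegral hh,
    ← intervalIntegral.integral_add_adjacent_intervals (hg₁.continuousOn_mul htri.continuousOn)
      (hg₂.continuousOn_mul htri.continuousOn), hleft, hright,
    integral_affine_mul_eq_of_hasDerivAt hF hGc hS hG hg₁,
    integral_affine_mul_eq_of_hasDerivAt hF hGc hS hG hg₂]
  field_simp
  ring

end SecondDifference

section AbsRpow

theorem intervalIntegrable_abs_rpow {r : ℝ} (hr : -1 < r) (a b : ℝ) :
    IntervalIntegrable (fun x : ℝ => |x| ^ r) volume a b := by
  have hloc : LocallyIntegrable (fun x : ℝ => |x| ^ r) volume :=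
    locallyIntegrable_of_norm_le_rpow (α := -r) (C := 1) (by simp) (by simp; linarith)
      (Filter.Eventually.of_forall fun x => by
        simp [abs_of_nonneg (Real.rpow_nonneg (abs_nonneg x) r)])
      (continuous_abs.measurable.pow_const r).aestronglyMeasurable
  exact (hloc.integrableOn_isCompact isCompact_uIcc).intervalIntegrable

variable {q : ℝ}

theorem continuous_mul_abs_rpow_sub_two_mul (hq : 1 < q) :
    Continuous fun x : ℝ => q * |x| ^ (q - 2) * x := by
  have hC1 : ContDiff ℝ 1 fun x : ℝ => |x| ^ q := by simpa using contDiff_norm_rpow (E := ℝ) hq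
  rw [← funext fun x => (hasDerivAt_abs_rpow x hq).deriv]
  exact hC1.continuous_deriv le_rfl

theorem hasDerivAt_mul_abs_rpow_sub_two_mul {x : ℝ} (hx : x ≠ 0) :
    HasDerivAt (fun y : ℝ => q * |y| ^ (q - 2) * y) (q * (q - 1) * |x| ^ (q - 2)) x := by
  have hx' : |x| ≠ 0 := abs_ne_zero.2 hx
  refine ((((hasDerivAt_abs hx).rpow_const (Or.inl hx')).const_mul q).mul
    (hasDerivAt_id x)).congr_deriv ?_
  have hpow : |x| ^ (q - 2 - 1) * |x| = |x| ^ (q - 2) := by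
    rw [← Real.rpow_add_one hx', sub_add_cancel]
  -- `x * sign x = |x|` collapses the chain-rule term onto `|x| ^ (q - 2)`
  rw [id, ← hpow, ← self_mul_sign x]
  ring

theorem integral_triangle_mul_abs_rpow (hq : 1 < q) {h : ℝ} (hh : 0 < h) (t : ℝ) :
    ∫ s, triangle h (t - s) * |s| ^ (q - 2) =
      (|t + h| ^ q + |t - h| ^ q - 2 * |t| ^ q) / (q * (q - 1) * h) := by
  have hdiff := integral_triangle_mul_eq_of_hasDerivAt (fun x => hasDerivAt_abs_rpow x hq)
    (continuous_mul_abs_rpow_sub_two_mul hq) (countable_singleton 0)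
    (fun x hx => hasDerivAt_mul_abs_rpow_sub_two_mul hx) hh t
    ((intervalIntegrable_abs_rpow (by linarith) _ _).const_mul (q * (q - 1)))
  simp_rw [mul_left_comm _ (q * (q - 1)), integral_const_mul] at hdiff
  have hq₀ : q * (q - 1) ≠ 0 := by nlinarith
  rw [eq_div_iff hh.ne'] at hdiff
  rw [eq_div_iff (mul_ne_zero hq₀ hh.ne'), ← hdiff]
  ring

end AbsRpow

/-- convolution of the triangle function with the Riesz kernel:
for `α ∈ (0,1/2)`, `h > 0` and `H = 1/2 + α`,
`∫_ℝ (1 − |t−s|/h)⁺ |s|^{2α−1} ds = (|t+h|^{2H} + |t−h|^{2H} − 2|t|^{2H}) / (2H(2H−1)h)`,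
the (rescaled) autocovariance of `h`-increments of fractional Brownian motion
of Hurst index `H`. -/
theorem triangle_conv_riesz_kernel
    (α h : ℝ) (hα : α ∈ Set.Ioo (0:ℝ) (1/2)) (hh : 0 < h) :
    ∀ t : ℝ,
      ∫ s : ℝ, max (1 - |t - s| / h) 0 * |s| ^ (2 * α - 1) =
        (|t + h| ^ (2 * (1/2 + α)) + |t - h| ^ (2 * (1/2 + α))
            - 2 * |t| ^ (2 * (1/2 + α))) /
          (2 * (1/2 + α) * (2 * (1/2 + α) - 1) * h) := by
  intro t
  rw [show 2 * α - 1 = 2 * (1/2 + α) - 2 by ring]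
  exact integral_triangle_mul_abs_rpow (by linarith [hα.1]) hh t
end

section
/- Let α ∈ (0,1/2), c > 0, κ > 0, v > 0, F > 0, and let Φ : [0,∞) → [0,∞) be bounded, measurable and integrable with ∫₀^∞ Φ = 1 and x^{1+α} Φ(x) → α c^α as x → ∞. Let (a_n) ⊂ (0,1) and (τ_n) ⊂ (0,∞) satisfy a_n → 1, τ_n → ∞ and (1 − a_n) τ_n^α → 0. Define the propagator kernel ζ_n(s) := (κ v/(1 − a_n)) · ((1 − a_n) + a_n ∫_s^∞ Φ(x) dx), the impact function MI_n(t) := F ∫₀^{t} ζ_n(s) ds for t ∈ [0, τ_n], and the renormalized impact RMI_n(t) := ((1 − a_n)/τ_n^{1−α}) · MI_n(t τ_n) for t ∈ [0,1]. Then for every t ∈ [0,1], lim_{n→∞} RMI_n(t) = K′ t^{1−α} with K′ = F κ v c^α/(1−α); that is, the market impact of a metaorder is asymptotically a concave power law with exponent 1 − α. -/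
open MeasureTheory Filter

lemma aux_tail (α L : ℝ) (hα : 0 < α) (Φ : ℝ → ℝ)
    (hΦpos : ∀ t : ℝ, 0 ≤ Φ t)
    (hΦint : IntegrableOn Φ (Set.Ici (0:ℝ)))
    (hΦtail : Tendsto (fun x : ℝ => x ^ (1 + α) * Φ x) atTop (nhds (α * L))) :
    Tendsto (fun s : ℝ => s ^ α * ∫ x in Set.Ici s, Φ x) atTop (nhds L) := by
  rw [Metric.tendsto_atTop]
  intro ε hε
  obtain ⟨X, hX⟩ := Metric.tendsto_atTop.mp hΦtail (α * ε / 2) (by positivity)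
  refine ⟨max X 1, fun s hs => ?_⟩
  have hs1 : (1:ℝ) ≤ s := le_trans (le_max_right _ _) hs
  have hsX : X ≤ s := le_trans (le_max_left _ _) hs
  have hspos : (0:ℝ) < s := lt_of_lt_of_le one_pos hs1
  have hineg : (-(1+α) : ℝ) < -1 := by linarith
  have hrint : IntegrableOn (fun x : ℝ => x ^ (-(1+α))) (Set.Ioi s) :=
    integrableOn_Ioi_rpow_of_lt hineg hspos
  have hΦints : IntegrableOn Φ (Set.Ioi s) :=
    hΦint.mono_set (fun x hx => le_of_lt (lt_of_lt_of_le hspos (le_of_lt hx)))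
  have hpt : ∀ x ∈ Set.Ioi s, |x ^ (1+α) * Φ x - α * L| ≤ α * ε / 2 := by
    intro x hx
    have := hX x (le_of_lt (lt_of_le_of_lt hsX hx))
    rw [Real.dist_eq] at this
    exact le_of_lt this
  have hIci : (∫ x in Set.Ici s, Φ x) = ∫ x in Set.Ioi s, Φ x :=
    integral_Ici_eq_integral_Ioi
  -- key: compute ∫ x in Ioi s, x^(-(1+α)) = s^(-α)/α
  have hint_val : (∫ x in Set.Ioi s, x ^ (-(1+α))) = s ^ (-α) / α := by
    rw [integral_Ioi_rpow_of_lt hineg hspos]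
    rw [show (-(1+α) + 1 : ℝ) = -α by ring]
    field_simp
  have hxpow : ∀ x : ℝ, x ∈ Set.Ioi s → x ^ (-(1+α)) * x ^ (1+α) = 1 := by
    intro x hx
    rw [← Real.rpow_add (lt_trans hspos hx), show (-(1+α)+(1+α):ℝ) = 0 by ring, Real.rpow_zero]
  -- upper bound on the tail integral
  have hub : (∫ x in Set.Ioi s, Φ x) ≤ (α * L + α * ε / 2) * (s ^ (-α) / α) := by
    rw [← hint_val, ← integral_const_mul]
    refine setIntegral_mono_on hΦints (hrint.const_mul _) measurableSet_Ioi ?_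
    intro x hx
    have h1 := hxpow x hx
    have h2 : Φ x = x ^ (-(1+α)) * (x ^ (1+α) * Φ x) := by
      rw [← mul_assoc, h1, one_mul]
    have h3 : x ^ (1+α) * Φ x ≤ α * L + α * ε / 2 := by
      have := hpt x hx; rw [abs_le] at this; linarith [this.2]
    have h4 : (0:ℝ) ≤ x ^ (-(1+α)) := Real.rpow_nonneg (le_of_lt (lt_trans hspos hx)) _
    calc Φ x = x ^ (-(1+α)) * (x ^ (1+α) * Φ x) := h2
      _ ≤ x ^ (-(1+α)) * (α * L + α * ε / 2) := mul_le_mul_of_nonneg_left h3 h4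
      _ = (α * L + α * ε / 2) * x ^ (-(1+α)) := mul_comm _ _
  have hlb : (α * L - α * ε / 2) * (s ^ (-α) / α) ≤ ∫ x in Set.Ioi s, Φ x := by
    rw [← hint_val, ← integral_const_mul]
    refine setIntegral_mono_on (hrint.const_mul _) hΦints measurableSet_Ioi ?_
    intro x hx
    have h1 := hxpow x hx
    have h2 : Φ x = x ^ (-(1+α)) * (x ^ (1+α) * Φ x) := by
      rw [← mul_assoc, h1, one_mul]
    have h3 : α * L - α * ε / 2 ≤ x ^ (1+α) * Φ x := by
      have := hpt x hx; rw [abs_le] at this; linarith [this.1]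
    have h4 : (0:ℝ) ≤ x ^ (-(1+α)) := Real.rpow_nonneg (le_of_lt (lt_trans hspos hx)) _
    calc (α * L - α * ε / 2) * x ^ (-(1+α)) = x ^ (-(1+α)) * (α * L - α * ε / 2) := mul_comm _ _
      _ ≤ x ^ (-(1+α)) * (x ^ (1+α) * Φ x) := mul_le_mul_of_nonneg_left h3 h4
      _ = Φ x := h2.symm
  have hsa : s ^ α * s ^ (-α) = 1 := by
    rw [← Real.rpow_add hspos]; simp
  have hsapos : (0:ℝ) ≤ s ^ α := Real.rpow_nonneg (le_of_lt hspos) _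
  have hub2 : s ^ α * ∫ x in Set.Ici s, Φ x ≤ L + ε / 2 := by
    rw [hIci]
    calc s ^ α * ∫ x in Set.Ioi s, Φ x
        ≤ s ^ α * ((α * L + α * ε / 2) * (s ^ (-α) / α)) := mul_le_mul_of_nonneg_left hub hsapos
      _ = (s ^ α * s ^ (-α)) * ((α * L + α * ε / 2) / α) := by ring
      _ = L + ε / 2 := by rw [hsa]; field_simp
  have hlb2 : L - ε / 2 ≤ s ^ α * ∫ x in Set.Ici s, Φ x := by
    rw [hIci]
    calc (L - ε / 2 : ℝ) = (s ^ α * s ^ (-α)) * ((α * L - α * ε / 2) / α) := by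
          rw [hsa]; field_simp
      _ = s ^ α * ((α * L - α * ε / 2) * (s ^ (-α) / α)) := by ring
      _ ≤ s ^ α * ∫ x in Set.Ioi s, Φ x := mul_le_mul_of_nonneg_left hlb hsapos
  rw [Real.dist_eq, abs_lt]
  constructor <;> linarith


lemma aux_cesaro (α L : ℝ) (hα0 : 0 < α) (hα1 : α < 1) (hL : 0 < L) (g : ℝ → ℝ)
    (hganti : AntitoneOn g (Set.Ici (0:ℝ))) (hgnn : ∀ s, 0 ≤ g s)
    (hg1 : ∀ s : ℝ, 0 ≤ s → g s ≤ 1)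
    (htail : Tendsto (fun s : ℝ => s ^ α * g s) atTop (nhds L)) :
    Tendsto (fun T : ℝ => T ^ (α - 1) * ∫ s in (0:ℝ)..T, g s) atTop
      (nhds (L / (1 - α))) := by
  have h1α : (0:ℝ) < 1 - α := by linarith
  rw [Metric.tendsto_atTop]
  intro ε hε
  set δ : ℝ := min (ε * (1 - α) / 4) (L / 2) with hδdef
  have hδpos : 0 < δ := lt_min (by positivity) (by positivity)
  have hδ1 : δ / (1 - α) ≤ ε / 4 := by
    rw [div_le_iff₀ h1α]
    calc δ ≤ ε * (1 - α) / 4 := min_le_left _ _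
      _ = ε / 4 * (1 - α) := by ring
  have hδ2 : δ ≤ L / 2 := min_le_right _ _
  obtain ⟨S₀, hS₀⟩ := Metric.tendsto_atTop.mp htail δ hδpos
  set S : ℝ := max S₀ 1 with hSdef
  have hS1 : (1:ℝ) ≤ S := le_max_right _ _
  have hSpos : (0:ℝ) < S := lt_of_lt_of_le one_pos hS1
  -- pointwise bounds for s ≥ S
  have hpt : ∀ s : ℝ, S ≤ s → (L - δ) * s ^ (-α) ≤ g s ∧ g s ≤ (L + δ) * s ^ (-α) := by
    intro s hs
    have hspos : (0:ℝ) < s := lt_of_lt_of_le hSpos hs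
    have := hS₀ s (le_trans (le_max_left _ _) hs)
    rw [Real.dist_eq, abs_lt] at this
    have hsa : s ^ (-α) * s ^ α = 1 := by
      rw [← Real.rpow_add hspos, show (-α + α : ℝ) = 0 by ring, Real.rpow_zero]
    have hnn : (0:ℝ) ≤ s ^ (-α) := Real.rpow_nonneg hspos.le _
    constructor
    · calc (L - δ) * s ^ (-α) = s ^ (-α) * (L - δ) := mul_comm _ _
        _ ≤ s ^ (-α) * (s ^ α * g s) := mul_le_mul_of_nonneg_left (by linarith [this.1]) hnn
        _ = (s ^ (-α) * s ^ α) * g s := by ring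
        _ = g s := by rw [hsa, one_mul]
    · calc g s = (s ^ (-α) * s ^ α) * g s := by rw [hsa, one_mul]
        _ = s ^ (-α) * (s ^ α * g s) := by ring
        _ ≤ s ^ (-α) * (L + δ) := mul_le_mul_of_nonneg_left (by linarith [this.2]) hnn
        _ = (L + δ) * s ^ (-α) := mul_comm _ _
  -- constant C and threshold
  obtain ⟨C, hCpos, hCS, hCL⟩ : ∃ C : ℝ, 0 < C ∧ S ≤ C ∧ L * S ^ (1 - α) / (1 - α) ≤ C := by
    refine ⟨max S (L * S ^ (1 - α) / (1 - α)) + 1, ?_, ?_, ?_⟩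
    · have h := le_max_left S (L * S ^ (1 - α) / (1 - α)); linarith
    · have h := le_max_left S (L * S ^ (1 - α) / (1 - α)); linarith
    · have h := le_max_right S (L * S ^ (1 - α) / (1 - α)); linarith
  have hplim : Tendsto (fun T : ℝ => T ^ (α - 1)) atTop (nhds 0) := by
    have := tendsto_rpow_neg_atTop h1α
    simpa [show -(1 - α) = α - 1 by ring] using this
  obtain ⟨T₁, hT₁⟩ := Metric.tendsto_atTop.mp hplim (ε / (4 * C)) (by positivity)
  refine ⟨max T₁ (max S 1), fun T hT => ?_⟩
  have hTS : S ≤ T := le_trans (le_max_left _ _) (le_trans (le_max_right _ _) hT)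
  have hT1 : (1:ℝ) ≤ T := le_trans (le_max_right _ _) (le_trans (le_max_right _ _) hT)
  have hTpos : (0:ℝ) < T := lt_of_lt_of_le one_pos hT1
  have hTpow_pos : (0:ℝ) < T ^ (α - 1) := Real.rpow_pos_of_pos hTpos _
  have hTpow_small : T ^ (α - 1) ≤ ε / (4 * C) := by
    have := hT₁ T (le_trans (le_max_left _ _) hT)
    rw [Real.dist_eq, abs_lt] at this
    linarith [this.2]
  have hTmul : T ^ (α - 1) * T ^ (1 - α) = 1 := by
    rw [← Real.rpow_add hTpos, show (α - 1 + (1 - α) : ℝ) = 0 by ring, Real.rpow_zero]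
  -- integrability pieces
  have hii1 : IntervalIntegrable g volume 0 S := by
    apply AntitoneOn.intervalIntegrable
    apply hganti.mono
    rw [Set.uIcc_of_le hSpos.le]
    exact fun x hx => hx.1
  have hii2 : IntervalIntegrable g volume S T := by
    apply AntitoneOn.intervalIntegrable
    apply hganti.mono
    rw [Set.uIcc_of_le hTS]
    exact fun x hx => le_trans hSpos.le hx.1
  have hiir : ∀ K : ℝ, IntervalIntegrable (fun s : ℝ => K * s ^ (-α)) volume S T := by
    intro K
    apply ContinuousOn.intervalIntegrable
    apply ContinuousOn.mul continuousOn_const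
    apply ContinuousOn.rpow_const continuousOn_id
    intro x hx
    rw [Set.uIcc_of_le hTS] at hx
    exact Or.inl (ne_of_gt (lt_of_lt_of_le hSpos hx.1))
  -- split the integral
  have hsplit : (∫ s in (0:ℝ)..T, g s) = (∫ s in (0:ℝ)..S, g s) + ∫ s in S..T, g s :=
    (intervalIntegral.integral_add_adjacent_intervals hii1 hii2).symm
  -- bounds on I₁
  have hI1a : (0:ℝ) ≤ ∫ s in (0:ℝ)..S, g s :=
    intervalIntegral.integral_nonneg hSpos.le (fun x _ => hgnn x)
  have hI1b : (∫ s in (0:ℝ)..S, g s) ≤ S := by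
    have : (∫ s in (0:ℝ)..S, g s) ≤ ∫ _ in (0:ℝ)..S, (1:ℝ) := by
      apply intervalIntegral.integral_mono_on hSpos.le hii1 intervalIntegrable_const
      intro x hx; exact hg1 x hx.1
    simpa using this
  -- value of ∫ s in S..T, s^(-α)
  have hrval : ∀ K : ℝ, (∫ s in S..T, K * s ^ (-α)) = K * ((T ^ (1 - α) - S ^ (1 - α)) / (1 - α)) := by
    intro K
    rw [intervalIntegral.integral_const_mul, integral_rpow (Or.inl (by linarith : (-1:ℝ) < -α))]
    rw [show (-α + 1 : ℝ) = 1 - α by ring]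
  -- bounds on I₂
  have hI2a : (L - δ) * ((T ^ (1 - α) - S ^ (1 - α)) / (1 - α)) ≤ ∫ s in S..T, g s := by
    rw [← hrval]
    apply intervalIntegral.integral_mono_on hTS (hiir _) hii2
    intro x hx; exact (hpt x hx.1).1
  have hI2b : (∫ s in S..T, g s) ≤ (L + δ) * ((T ^ (1 - α) - S ^ (1 - α)) / (1 - α)) := by
    rw [← hrval]
    apply intervalIntegral.integral_mono_on hTS hii2 (hiir _)
    intro x hx; exact (hpt x hx.1).2
  -- pow positivity facts
  have hS1α : (0:ℝ) ≤ S ^ (1 - α) := Real.rpow_nonneg hSpos.le _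
  have hT1α : (0:ℝ) ≤ T ^ (1 - α) := Real.rpow_nonneg hTpos.le _
  have hLδ : 0 < L - δ := by linarith
  -- combine: upper bound
  have hCT : C * T ^ (α - 1) ≤ ε / 4 := by
    calc C * T ^ (α - 1) ≤ C * (ε / (4 * C)) := mul_le_mul_of_nonneg_left hTpow_small hCpos.le
      _ = ε / 4 := by field_simp
  have hub : T ^ (α - 1) * ∫ s in (0:ℝ)..T, g s ≤ L / (1 - α) + ε / 2 := by
    rw [hsplit]
    have step1 : (∫ s in (0:ℝ)..S, g s) + (∫ s in S..T, g s)
        ≤ S + (L + δ) * (T ^ (1 - α) / (1 - α)) := by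
      have : (L + δ) * ((T ^ (1 - α) - S ^ (1 - α)) / (1 - α))
          ≤ (L + δ) * (T ^ (1 - α) / (1 - α)) := by
        apply mul_le_mul_of_nonneg_left _ (by linarith : (0:ℝ) ≤ L + δ)
        exact (div_le_div_iff_of_pos_right h1α).mpr (by linarith)
      linarith [hI1b, hI2b]
    calc T ^ (α - 1) * ((∫ s in (0:ℝ)..S, g s) + (∫ s in S..T, g s))
        ≤ T ^ (α - 1) * (S + (L + δ) * (T ^ (1 - α) / (1 - α))) :=
          mul_le_mul_of_nonneg_left step1 hTpow_pos.le
      _ = S * T ^ (α - 1) + (L + δ) / (1 - α) * (T ^ (α - 1) * T ^ (1 - α)) := by ring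
      _ = S * T ^ (α - 1) + (L + δ) / (1 - α) := by rw [hTmul, mul_one]
      _ ≤ ε / 4 + (L / (1 - α) + δ / (1 - α)) := by
          have hST : S * T ^ (α - 1) ≤ C * T ^ (α - 1) :=
            mul_le_mul_of_nonneg_right hCS hTpow_pos.le
          have : (L + δ) / (1 - α) = L / (1 - α) + δ / (1 - α) := by ring
          linarith [hCT]
      _ ≤ L / (1 - α) + ε / 2 := by linarith [hδ1]
  -- lower bound
  have hlb : L / (1 - α) - ε / 2 ≤ T ^ (α - 1) * ∫ s in (0:ℝ)..T, g s := by
    rw [hsplit]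
    have step1 : (L - δ) * ((T ^ (1 - α) - S ^ (1 - α)) / (1 - α))
        ≤ (∫ s in (0:ℝ)..S, g s) + (∫ s in S..T, g s) := by linarith [hI1a, hI2a]
    have step2 : T ^ (α - 1) * ((L - δ) * ((T ^ (1 - α) - S ^ (1 - α)) / (1 - α)))
        ≤ T ^ (α - 1) * ((∫ s in (0:ℝ)..S, g s) + (∫ s in S..T, g s)) :=
      mul_le_mul_of_nonneg_left step1 hTpow_pos.le
    have key : T ^ (α - 1) * ((L - δ) * ((T ^ (1 - α) - S ^ (1 - α)) / (1 - α)))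
        = (L - δ) / (1 - α) - (L - δ) * S ^ (1 - α) / (1 - α) * T ^ (α - 1) := by
      have : T ^ (α - 1) * ((L - δ) * ((T ^ (1 - α) - S ^ (1 - α)) / (1 - α)))
          = (L - δ) / (1 - α) * (T ^ (α - 1) * T ^ (1 - α))
            - (L - δ) * S ^ (1 - α) / (1 - α) * T ^ (α - 1) := by ring
      rw [this, hTmul, mul_one]
    have hsmall : (L - δ) * S ^ (1 - α) / (1 - α) * T ^ (α - 1) ≤ ε / 4 := by
      have h0 : (L - δ) * S ^ (1 - α) / (1 - α) ≤ L * S ^ (1 - α) / (1 - α) := by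
        exact (div_le_div_iff_of_pos_right h1α).mpr
          (mul_le_mul_of_nonneg_right (by linarith) hS1α)
      have h1 : (L - δ) * S ^ (1 - α) / (1 - α) ≤ C := le_trans h0 hCL
      have h2 : (0:ℝ) ≤ (L - δ) * S ^ (1 - α) / (1 - α) := by positivity
      calc (L - δ) * S ^ (1 - α) / (1 - α) * T ^ (α - 1)
          ≤ C * T ^ (α - 1) := mul_le_mul_of_nonneg_right h1 hTpow_pos.le
        _ ≤ ε / 4 := hCT
    have hδ3 : L / (1 - α) - δ / (1 - α) = (L - δ) / (1 - α) := by ring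
    -- combine
    have : (L - δ) / (1 - α) - ε / 4 ≤ T ^ (α - 1) * ((∫ s in (0:ℝ)..S, g s) + (∫ s in S..T, g s)) := by
      rw [key] at step2; linarith
    linarith [hδ1]
  rw [Real.dist_eq, abs_lt]
  constructor <;> linarith

/-- asymptotic power-law impact of a metaorder. In the nearly
unstable Hawkes order-flow model with kernels `a_n Φ` (`a_n → 1`), metaorder
lengths `τ_n → ∞` with `(1−a_n)τ_n^α → 0`, propagator kernel
`ζ_n(s) = (κv/(1−a_n))((1−a_n) + a_n ∫_s^∞ Φ)`, impact `MI_n(t) = F∫₀^t ζ_n`,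
and renormalized impact `RMI_n(t) = ((1−a_n)/τ_n^{1−α}) MI_n(tτ_n)`, one has
`RMI_n(t) → K′ t^{1−α}` with `K′ = Fκv c^α/(1−α)` for every `t ∈ [0,1]`. -/
theorem metaorder_power_law_impact
    (α c κ v F : ℝ) (hα : α ∈ Set.Ioo (0:ℝ) (1/2)) (hc : 0 < c)
    (hκ : 0 < κ) (hv : 0 < v) (hF : 0 < F)
    (Φ : ℝ → ℝ)
    (hΦpos : ∀ t : ℝ, 0 ≤ Φ t)
    (hΦbdd : ∃ M : ℝ, ∀ t : ℝ, Φ t ≤ M)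
    (hΦmeas : Measurable Φ)
    (hΦint : IntegrableOn Φ (Set.Ici (0:ℝ)))
    (hΦnorm : (∫ t in Set.Ici (0:ℝ), Φ t) = 1)
    (hΦtail : Tendsto (fun x : ℝ => x ^ (1 + α) * Φ x) atTop (nhds (α * c ^ α)))
    (a : ℕ → ℝ) (τ : ℕ → ℝ)
    (ha01 : ∀ n, a n ∈ Set.Ioo (0:ℝ) 1) (hτpos : ∀ n, 0 < τ n)
    (ha1 : Tendsto a atTop (nhds 1))
    (hτ : Tendsto τ atTop atTop)
    (haτ : Tendsto (fun n => (1 - a n) * τ n ^ α) atTop (nhds 0))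
    (ζ : ℕ → ℝ → ℝ)
    (hζ : ∀ n (s : ℝ), ζ n s =
      κ * v / (1 - a n) * ((1 - a n) + a n * ∫ x in Set.Ici s, Φ x))
    (MI : ℕ → ℝ → ℝ)
    (hMI : ∀ n (t : ℝ), MI n t = F * ∫ s in (0:ℝ)..t, ζ n s)
    (RMI : ℕ → ℝ → ℝ)
    (hRMI : ∀ n (t : ℝ), RMI n t = (1 - a n) / τ n ^ (1 - α) * MI n (t * τ n)) :
    ∀ t ∈ Set.Icc (0:ℝ) 1,
      Tendsto (fun n => RMI n t) atTop
        (nhds (F * κ * v * c ^ α / (1 - α) * t ^ (1 - α))) := by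
  obtain ⟨hα0, hα2⟩ := hα
  have hα1 : α < 1 := lt_trans hα2 (by norm_num)
  have h1α : (0:ℝ) < 1 - α := by linarith
  -- facts about the tail function Ψ s = ∫ x in Ici s, Φ x
  have hΨnn : ∀ s : ℝ, 0 ≤ ∫ x in Set.Ici s, Φ x := fun s =>
    setIntegral_nonneg measurableSet_Ici (fun x _ => hΦpos x)
  have hΨanti : AntitoneOn (fun s : ℝ => ∫ x in Set.Ici s, Φ x) (Set.Ici (0:ℝ)) := by
    intro s hs s' hs' hss'
    exact setIntegral_mono_set (hΦint.mono_set (Set.Ici_subset_Ici.mpr hs))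
      (ae_of_all _ fun x => hΦpos x)
      (HasSubset.Subset.eventuallyLE (Set.Ici_subset_Ici.mpr hss'))
  have hΨ1 : ∀ s : ℝ, 0 ≤ s → (∫ x in Set.Ici s, Φ x) ≤ 1 := by
    intro s hs
    rw [← hΦnorm]
    exact setIntegral_mono_set hΦint (ae_of_all _ fun x => hΦpos x)
      (HasSubset.Subset.eventuallyLE (Set.Ici_subset_Ici.mpr hs))
  have hcα : (0:ℝ) < c ^ α := Real.rpow_pos_of_pos hc α
  have htail := aux_tail α (c ^ α) hα0 Φ hΦpos hΦint hΦtail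
  have hces := aux_cesaro α (c ^ α) hα0 hα1 hcα
    (fun s : ℝ => ∫ x in Set.Ici s, Φ x) hΨanti hΨnn hΨ1 htail
  intro t ht
  rcases eq_or_lt_of_le ht.1 with h0 | htpos
  · -- t = 0
    have hz : ∀ n, RMI n t = 0 := by
      intro n
      rw [hRMI, hMI, ← h0]
      simp
    rw [show (fun n => RMI n t) = fun _ : ℕ => (0:ℝ) from funext hz,
      ← h0, Real.zero_rpow (by linarith : (1:ℝ) - α ≠ 0), mul_zero]
    exact tendsto_const_nhds
  · -- t > 0
    have hkey : ∀ n, RMI n t =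
        F * κ * v * t * ((1 - a n) * τ n ^ α)
        + F * κ * v * t ^ (1 - α) *
          (a n * ((t * τ n) ^ (α - 1) * ∫ s in (0:ℝ)..(t * τ n), ∫ x in Set.Ici s, Φ x)) := by
      intro n
      have hτn := hτpos n
      have h1an : (0:ℝ) < 1 - a n := by linarith [(ha01 n).2]
      have hTpos : 0 < t * τ n := mul_pos htpos hτn
      have hiiΨ : IntervalIntegrable (fun s : ℝ => ∫ x in Set.Ici s, Φ x) volume 0 (t * τ n) := by
        apply AntitoneOn.intervalIntegrable
        apply hΨanti.mono
        rw [Set.uIcc_of_le hTpos.le]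
        exact fun x hx => hx.1
      have hζint : (∫ s in (0:ℝ)..(t * τ n), ζ n s)
          = κ * v / (1 - a n) * ((1 - a n) * (t * τ n)
            + a n * ∫ s in (0:ℝ)..(t * τ n), ∫ x in Set.Ici s, Φ x) := by
        simp only [hζ]
        rw [intervalIntegral.integral_const_mul,
          intervalIntegral.integral_add intervalIntegrable_const (hiiΨ.const_mul (a n)),
          intervalIntegral.integral_const_mul, intervalIntegral.integral_const]
        rw [smul_eq_mul]
        ring
      -- rpow identities
      have hQ : τ n ^ (α - 1) = (τ n ^ (1 - α))⁻¹ := by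
        rw [show (α - 1 : ℝ) = -(1 - α) by ring, Real.rpow_neg hτn.le]
      have hP : (0:ℝ) < τ n ^ (1 - α) := Real.rpow_pos_of_pos hτn _
      have e3 : (t * τ n) ^ (α - 1) = t ^ (α - 1) * τ n ^ (α - 1) :=
        Real.mul_rpow htpos.le hτn.le
      have e4 : t ^ (1 - α) * t ^ (α - 1) = 1 := by
        rw [← Real.rpow_add htpos, show (1 - α + (α - 1) : ℝ) = 0 by ring, Real.rpow_zero]
      have e5 : τ n ^ (α - 1) * τ n = τ n ^ α := by
        nth_rewrite 2 [← Real.rpow_one (τ n)]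
        rw [← Real.rpow_add hτn, show (α - 1 + 1 : ℝ) = α by ring]
      have e6 : τ n ^ (α - 1) = t ^ (1 - α) * (t * τ n) ^ (α - 1) := by
        rw [e3, ← mul_assoc, e4, one_mul]
      set I : ℝ := ∫ s in (0:ℝ)..(t * τ n), ∫ x in Set.Ici s, Φ x with hIdef
      have stepA : RMI n t = F * κ * v * τ n ^ (α - 1) * ((1 - a n) * (t * τ n) + a n * I) := by
        rw [hRMI, hMI, hζint, hQ]
        field_simp
      calc RMI n t = F * κ * v * τ n ^ (α - 1) * ((1 - a n) * (t * τ n) + a n * I) := stepA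
        _ = F * κ * v * t * ((1 - a n) * (τ n ^ (α - 1) * τ n))
            + F * κ * v * (a n * (τ n ^ (α - 1) * I)) := by ring
        _ = F * κ * v * t * ((1 - a n) * τ n ^ α)
            + F * κ * v * (a n * ((t ^ (1 - α) * (t * τ n) ^ (α - 1)) * I)) := by
            rw [e5, ← e6]
        _ = F * κ * v * t * ((1 - a n) * τ n ^ α)
            + F * κ * v * t ^ (1 - α) * (a n * ((t * τ n) ^ (α - 1) * I)) := by ring
    -- limits
    have hTn : Tendsto (fun n => t * τ n) atTop atTop := hτ.const_mul_atTop htpos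
    have h2 := hces.comp hTn
    have hterm1 : Tendsto (fun n => F * κ * v * t * ((1 - a n) * τ n ^ α)) atTop
        (nhds (F * κ * v * t * 0)) := haτ.const_mul (F * κ * v * t)
    have hterm2 : Tendsto (fun n => F * κ * v * t ^ (1 - α) *
        (a n * ((t * τ n) ^ (α - 1) * ∫ s in (0:ℝ)..(t * τ n), ∫ x in Set.Ici s, Φ x)))
        atTop (nhds (F * κ * v * t ^ (1 - α) * (1 * (c ^ α / (1 - α))))) :=
      (ha1.mul h2).const_mul (F * κ * v * t ^ (1 - α))
    have hsum := hterm1.add hterm2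
    rw [show F * κ * v * t * 0 + F * κ * v * t ^ (1 - α) * (1 * (c ^ α / (1 - α)))
        = F * κ * v * c ^ α / (1 - α) * t ^ (1 - α) by ring] at hsum
    exact Tendsto.congr (fun n => (hkey n).symm) hsum
end
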